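/- arXiv:1707.02337 — 5 statements merged into one kernel-verified Lean document; each statement's English description precedes it below -/
import Mathlib

section
/- Let C ⊆ F_q^{n×t} be an F_q-linear array code and i* a node index. If there is a linear repair scheme for node i* from a set S (i* ∉ S) with bandwidth b, then there exist t matrices W^{(0)},…,W^{(t−1)} ∈ C^⊥ whose nonzero rows are contained in S ∪ {i*}, such that {W^{(j)}_{i*,·} : j ∈ [0,t−1]} has dimension t and Σ_{i∈S} dim span{W^{(j)}_{i,·} : j ∈ [0,t−1]} ≤ b. -/
/-!
Each repair equation `c_{i*,j} = Σ_{i∈S} ⟨w i j, c_i⟩` is itself a parity check: the matrix whose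
row `i*` is `-e_j` and whose row `i ∈ S` is the query vector `w i j` is orthogonal to every
codeword. Its rows over `S` are exactly the queries, so their spans are the query spaces, while
the rows `-e_j` at `i*` span all of `Kᵗ`.
-/

namespace RepairScheme

variable {K ι κ : Type*} [Field K] [DecidableEq ι] [DecidableEq κ]

def repairMatrix (istar : ι) (S : Finset ι) (w : ι → κ → κ → K) (j : κ) : ι → κ → K :=
  fun i => if i = istar then -Pi.single j 1 else if i ∈ S then w i j else 0

variable {istar i : ι} {S : Finset ι} (w : ι → κ → κ → K) (j : κ)

theorem repairMatrix_apply_self : repairMatrix istar S w j istar = -Pi.single j 1 :=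
  if_pos rfl

theorem repairMatrix_apply_of_mem (h : istar ∉ S) (hi : i ∈ S) :
    repairMatrix istar S w j i = w i j := by
  simp [repairMatrix, hi, ne_of_mem_of_not_mem hi h]

theorem repairMatrix_apply_of_notMem (hi : i ∉ S) (hne : i ≠ istar) :
    repairMatrix istar S w j i = 0 := by
  simp [repairMatrix, hi, hne]

theorem sum_repairMatrix_mul [Fintype ι] [Fintype κ] (h : istar ∉ S) (C : ι → κ → K) :
    ∑ r, ∑ c, repairMatrix istar S w j r c * C r c
      = ∑ i ∈ S, ∑ r, w i j r * C i r - C istar j := by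
  have hsupp (r) (hr : ∑ c, repairMatrix istar S w j r c * C r c ≠ 0) : r ∈ insert istar S := by
    by_contra hr'
    rw [Finset.mem_insert, not_or] at hr'
    simp [repairMatrix_apply_of_notMem w j hr'.2 hr'.1] at hr
  have hS : ∀ i ∈ S, ∑ c, repairMatrix istar S w j i c * C i c = ∑ r, w i j r * C i r :=
    fun i hi => by rw [repairMatrix_apply_of_mem w j h hi]
  rw [← Fintype.sum_subset hsupp, Finset.sum_insert h, Finset.sum_congr rfl hS,
    repairMatrix_apply_self]
  simp only [Pi.neg_apply, Pi.single_apply, neg_mul, ite_mul, one_mul, zero_mul,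
    Finset.sum_neg_distrib, Finset.sum_ite_eq', Finset.mem_univ, if_true]
  ring

theorem finrank_span_repairMatrix_self [Fintype κ] :
    Module.finrank K (Submodule.span K (Set.range fun j => repairMatrix istar S w j istar))
      = Fintype.card κ := by
  rw [show (fun j => repairMatrix istar S w j istar) = fun j => -Pi.single j 1 from
    funext (repairMatrix_apply_self w)]
  exact finrank_span_eq_card (Pi.linearIndependent_single_one κ K).neg

theorem finrank_span_repairMatrix_of_mem (h : istar ∉ S) (hi : i ∈ S) :
    Module.finrank K (Submodule.span K (Set.range fun j => repairMatrix istar S w j i))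
      = Module.finrank K (Submodule.span K (Set.range fun j => w i j)) := by
  rw [show (fun j => repairMatrix istar S w j i) = w i from
    funext fun j => repairMatrix_apply_of_mem w j h hi]

end RepairScheme

open RepairScheme in
theorem repair_scheme_gives_repair_matrices_general {n t b : ℕ} (K : Type*) [Field K]
    (𝒞 : Set (Matrix (Fin n) (Fin t) K))
    (istar : Fin n) (S : Finset (Fin n)) (hiS : istar ∉ S)
    (w : Fin n → Fin t → (Fin t → K))
    (hrec : ∀ C ∈ 𝒞, ∀ j : Fin t, C istar j = ∑ i ∈ S, ∑ r, w i j r * C i r)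
    (hbw : ∑ i ∈ S,
      Module.finrank K (Submodule.span K (Set.range fun j => w i j)) ≤ b) :
    ∃ W : Fin t → Matrix (Fin n) (Fin t) K,
      (∀ j, ∀ C ∈ 𝒞, ∑ r, ∑ c, (W j) r c * C r c = 0) ∧
      (∀ (j) (i : Fin n), i ∉ S → i ≠ istar → W j i = 0) ∧
      Module.finrank K (Submodule.span K (Set.range fun j => W j istar)) = t ∧
      ∑ i ∈ S,
        Module.finrank K (Submodule.span K (Set.range fun j => W j i)) ≤ b := by
  refine ⟨repairMatrix istar S w, fun j C hC => ?_,
    fun j i hi hne => repairMatrix_apply_of_notMem w j hi hne, ?_, ?_⟩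
  · exact (sum_repairMatrix_mul w j hiS C).trans (by rw [← hrec C hC j, sub_self])
  · exact (finrank_span_repairMatrix_self w).trans (Fintype.card_fin t)
  · exact le_of_eq_of_le
      (Finset.sum_congr rfl fun i hi => finrank_span_repairMatrix_of_mem w hiS hi) hbw

/-- conversely, a linear repair scheme for node `i*` from `S`
(per-entry linear functionals `w i j` applied to the rows of the helper nodes,
with total query-space dimension at most `b`) yields `t` repair matrices in the
dual code supported on `S ∪ {i*}`, with full-dimensional row `i*` and total
row-span dimensions over `S` at most `b`. -/
theorem repair_scheme_gives_repair_matrices {n t b : ℕ} (K : Type*) [Field K] [Fintype K]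
    (𝒞 : Set (Matrix (Fin n) (Fin t) K))
    (hadd : ∀ C C', C ∈ 𝒞 → C' ∈ 𝒞 → C + C' ∈ 𝒞)
    (hsmul : ∀ (c : K) (C), C ∈ 𝒞 → c • C ∈ 𝒞)
    (istar : Fin n) (S : Finset (Fin n)) (hiS : istar ∉ S)
    (w : Fin n → Fin t → (Fin t → K))
    (hrec : ∀ C ∈ 𝒞, ∀ j : Fin t, C istar j = ∑ i ∈ S, ∑ r, w i j r * C i r)
    (hbw : ∑ i ∈ S,
      Module.finrank K (Submodule.span K (Set.range fun j => w i j)) ≤ b) :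
    ∃ W : Fin t → Matrix (Fin n) (Fin t) K,
      (∀ j, ∀ C ∈ 𝒞, ∑ r, ∑ c, (W j) r c * C r c = 0) ∧
      (∀ (j) (i : Fin n), i ∉ S → i ≠ istar → W j i = 0) ∧
      Module.finrank K (Submodule.span K (Set.range fun j => W j istar)) = t ∧
      ∑ i ∈ S,
        Module.finrank K (Submodule.span K (Set.range fun j => W j i)) ≤ b :=
  repair_scheme_gives_repair_matrices_general K 𝒞 istar S hiS w hrec hbw
end

section
/- Let C be a piggybacking code over F_q with base code generated by F ∈ F_q^{k×n} where any k columns of F are linearly independent (MDS). If W ∈ C^⊥ and column index i is the rightmost nonzero column of W (i.e., w_{·,j} = 0 for all j > i and w_{·,i} ≠ 0), then w_{·,i} has at least k+1 nonzero entries. -/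
open Matrix

/-- `G` generates an MDS code: any `k` columns of `G` are linearly independent. -/
def IsMDS {n k : ℕ} {K : Type*} [Field K] (G : Matrix (Fin k) (Fin n) K) : Prop :=
  ∀ s : Finset (Fin n), s.card = k →
    LinearIndependent K (fun j : s => fun r : Fin k => G r j.1)

/-- The piggybacking code with base generator `G` and piggybacking matrices `P i j`. -/
def piggyCode {n t k : ℕ} {K : Type*} [Field K]
    (G : Matrix (Fin k) (Fin n) K) (P : Fin t → Fin t → Matrix (Fin k) (Fin n) K) :
    Set (Matrix (Fin n) (Fin t) K) :=
  {C | ∃ a : Fin t → (Fin k → K), ∀ (r : Fin n) (j : Fin t),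
    C r j = (∑ i ∈ Finset.Iio j, (a i) ᵥ* (P i j)) r + ((a j) ᵥ* G) r}

/-!
The dual relation, tested against the codeword whose only nonzero message is `v` in column `i`,
only sees column `i` of `W` (its columns right of `i` vanish, the codeword's columns left of `i`
vanish), where the codeword equals `v ᵥ* G`. Hence `(v ᵥ* G) ⬝ᵥ w = v ⬝ᵥ (G *ᵥ w) = 0` for all `v`,
i.e. the column `w` lies in the kernel of `G`, and a nonzero kernel vector supported on at most
`k` coordinates would give a dependence among `k` columns of `G`.
-/

open Finset

section MDS

variable {n k : ℕ} {K : Type*} [Field K] {G : Matrix (Fin k) (Fin n) K}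

theorem IsMDS.eq_zero_of_mulVec_eq_zero (hG : IsMDS G) {s : Finset (Fin n)} (hs : #s = k)
    {x : Fin n → K} (hx : G *ᵥ x = 0) (hxs : ∀ r ∉ s, x r = 0) : x = 0 := by
  have hsum : ∑ j : s, x j • (fun m => G m j) = 0 := by
    funext m
    have := congrFun hx m
    simp only [mulVec, dotProduct, Pi.zero_apply] at this
    simp only [Finset.sum_apply, Pi.smul_apply, smul_eq_mul, Pi.zero_apply]
    rw [sum_coe_sort s fun j => x j * G m j, ← this,
      sum_subset (subset_univ s) fun r _ hr => by simp [hxs r hr]]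
    exact sum_congr rfl fun r _ => mul_comm _ _
  have hcoef := Fintype.linearIndependent_iff.mp (hG s hs) _ hsum
  funext r
  by_cases hr : r ∈ s
  · exact hcoef ⟨r, hr⟩
  · exact hxs r hr

theorem IsMDS.card_support_ge [DecidableEq K] (hG : IsMDS G) (hkn : k ≤ n)
    {x : Fin n → K} (hx : G *ᵥ x = 0) (hx0 : x ≠ 0) : k + 1 ≤ #{r | x r ≠ 0} := by
  by_contra! hlt
  obtain ⟨s, hsupp, hs⟩ :=
    exists_superset_card_eq (Nat.le_of_lt_succ hlt) (by simpa using hkn)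
  refine hx0 (hG.eq_zero_of_mulVec_eq_zero hs hx fun r hr => ?_)
  by_contra hxr
  exact hr (hsupp (by simpa using hxr))

end MDS

section Piggyback

variable {n t k : ℕ} {K : Type*} [Field K]
  (G : Matrix (Fin k) (Fin n) K) (P : Fin t → Fin t → Matrix (Fin k) (Fin n) K)

def piggyEncode (a : Fin t → Fin k → K) : Matrix (Fin n) (Fin t) K :=
  fun r j => (∑ i ∈ Iio j, a i ᵥ* P i j) r + (a j ᵥ* G) r

theorem piggyEncode_mem_piggyCode (a : Fin t → Fin k → K) : piggyEncode G P a ∈ piggyCode G P :=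
  ⟨a, fun _ _ => rfl⟩

theorem piggyEncode_single_of_le {i j : Fin t} (hji : j ≤ i) (v : Fin k → K) (r : Fin n) :
    piggyEncode G P (Pi.single i v) r j = if j = i then (v ᵥ* G) r else 0 := by
  have hpiggy : ∑ l ∈ Iio j, (Pi.single i v : Fin t → Fin k → K) l ᵥ* P l j = 0 :=
    sum_eq_zero fun l hl => by
      rw [Pi.single_eq_of_ne (mem_Iio.mp hl |>.trans_le hji).ne, zero_vecMul]
  unfold piggyEncode
  rw [hpiggy, Pi.zero_apply, zero_add]
  split_ifs with h
  · rw [h, Pi.single_eq_same]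
  · rw [Pi.single_eq_of_ne h, zero_vecMul, Pi.zero_apply]

theorem mulVec_col_eq_zero_of_forall_mem_piggyCode (W : Matrix (Fin n) (Fin t) K)
    (hW : ∀ C ∈ piggyCode G P, ∑ r, ∑ j, W r j * C r j = 0) {i : Fin t}
    (hright : ∀ j : Fin t, i < j → (fun r => W r j) = 0) :
    G *ᵥ (fun r => W r i) = 0 := by
  refine funext fun m => ?_
  let C := piggyEncode G P (Pi.single i (Pi.single m 1))
  have hcol : ∀ j, ∑ r, W r j * C r j = if j = i then ∑ r, W r i * G m r else 0 := by
    intro j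
    rcases le_or_gt j i with hji | hij
    · simp_rw [C, piggyEncode_single_of_le G P hji, single_one_vecMul]
      split_ifs with h
      · rw [h]; rfl
      · simp
    · simp [congrFun (hright j hij), (ne_of_gt hij)]
  have := hW C (piggyEncode_mem_piggyCode G P _)
  rw [sum_comm] at this
  simp_rw [hcol, sum_ite_eq', mem_univ, if_true] at this
  simpa [mulVec, dotProduct, mul_comm] using this

end Piggyback

theorem rightmost_column_weight_general {n t k : ℕ} (K : Type*) [Field K]
    [DecidableEq K]
    (hkn : k ≤ n)
    (G : Matrix (Fin k) (Fin n) K) (hMDS : IsMDS G)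
    (P : Fin t → Fin t → Matrix (Fin k) (Fin n) K)
    (W : Matrix (Fin n) (Fin t) K)
    (hW : ∀ C ∈ piggyCode G P, ∑ r, ∑ j, W r j * C r j = 0)
    (i : Fin t)
    (hright : ∀ j : Fin t, i < j → (fun r => W r j) = 0)
    (hnz : (fun r => W r i) ≠ 0) :
    k + 1 ≤ (Finset.univ.filter fun r : Fin n => W r i ≠ 0).card :=
  hMDS.card_support_ge hkn (mulVec_col_eq_zero_of_forall_mem_piggyCode G P W hW hright) hnz

/-- if `W` is in the dual of a piggybacking code with MDS base generator
`G`, and column `i` is the rightmost nonzero column of `W`, then column `i` has at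
least `k+1` nonzero entries. -/
theorem rightmost_column_weight {n t k : ℕ} (K : Type*) [Field K] [Fintype K]
    [DecidableEq K]
    (hkn : k ≤ n)
    (G : Matrix (Fin k) (Fin n) K) (hMDS : IsMDS G)
    (P : Fin t → Fin t → Matrix (Fin k) (Fin n) K)
    (W : Matrix (Fin n) (Fin t) K)
    (hW : ∀ C ∈ piggyCode G P, ∑ r, ∑ j, W r j * C r j = 0)
    (i : Fin t)
    (hright : ∀ j : Fin t, i < j → (fun r => W r j) = 0)
    (hnz : (fun r => W r i) ≠ 0) :
    k + 1 ≤ (Finset.univ.filter fun r : Fin n => W r i ≠ 0).card :=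
  rightmost_column_weight_general K hkn G hMDS P W hW i hright hnz
end

section
/- Let C be a perfect-bandwidth (n,k) piggybacking code over F_q with t substripes, 2 ≤ t, k ≥ 2. Any repair scheme {W^{(0)},…,W^{(t−1)}} for a failed node i* from repair set S of size k+t−1 is equivalent (via invertible linear combinations of the repair matrices) to a scheme in standard form: there is a partition S = T ∪ {r_0,…,r_{t−1}} with |T| = k−1 such that each W^{(j)} is nonzero only on rows T ∪ {r_j, i*}, and the last column of each W^{(j)} has exactly k+1 nonzero entries. -/
open Matrix

/-- Membership in the dual of the piggybacking code (with base generator `G` and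
piggybacking matrices `P i j`, used for `i < j`), via the column characterization. -/
def PiggyDual {n t k : ℕ} {K : Type*} [Field K] [Fintype K]
    (G : Matrix (Fin k) (Fin n) K) (P : Fin t → Fin t → Matrix (Fin k) (Fin n) K)
    (W : Matrix (Fin n) (Fin t) K) : Prop :=
  ∀ i : Fin t,
    G *ᵥ (fun r => W r i) + ∑ j ∈ Finset.Ioi i, (P i j) *ᵥ (fun r => W r j) = 0

/-!
Row `i ∈ S` of the repair matrices spans a line, so `W ℓ i = c i ℓ • v i`. A nonzero
combination `∑ ℓ, a ℓ • W ℓ` is a nonzero dual codeword (its row `i*` is nonzero by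
independence), and its rightmost nonzero column lies in the dual of the MDS base code, so it
has at least `k + 1` nonzero entries. Hence `a` is orthogonal to at most `t` of the vectors
`c i`, `i ∈ S`: any `t + 1` of them form a basis. Choose `i₀ ∈ S` where the last coordinate
of `v i₀` is nonzero and `t + 1` further rows `r j`; the dual basis `A` of the `c (r j)` makes
the `j`-th new repair matrix vanish on the rows `r j'`, `j' ≠ j`, but not at `i₀`. Its last
column is then a nonzero dual codeword of the base code supported on `T ∪ {r j, i*}`, a set
of at most `k + 1` rows, so it has exactly `k + 1` nonzero entries.
-/

open Finset

theorem IsMDS.lt_card_support {n k : ℕ} {K : Type*} [Field K] [DecidableEq K]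
    {G : Matrix (Fin k) (Fin n) K} (hG : IsMDS G) (hkn : k ≤ n) {x : Fin n → K}
    (hx : x ≠ 0) (hGx : G *ᵥ x = 0) : k < #{i | x i ≠ 0} := by
  by_contra! hle
  obtain ⟨s, hsupp, -, hs⟩ := exists_subsuperset_card_eq (subset_univ _) hle
    (by simpa using hkn)
  have hxs : ∀ i ∉ s, x i = 0 := fun i hi => by
    by_contra h
    exact hi (hsupp (by simpa using h))
  have hcomb : ∑ i ∈ s, x i • (fun r => G r i) = 0 := by
    ext r
    rw [← congrFun hGx r, sum_subset (subset_univ s) fun i _ hi => by simp [hxs i hi]]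
    simp [mulVec, dotProduct, mul_comm]
  apply hx
  ext i
  by_cases hi : i ∈ s
  · exact (linearIndepOn_finset_iff (v := fun i r => G r i)).mp (hG s hs) x hcomb i hi
  · exact hxs i hi

theorem Matrix.sum_smul_apply {ι m n K : Type*} [Fintype ι] [Semiring K]
    (a : ι → K) (W : ι → Matrix m n K) (i : m) :
    (∑ ℓ, a ℓ • W ℓ) i = ∑ ℓ, a ℓ • W ℓ i := by
  ext j
  simp [Matrix.sum_apply]

theorem exists_smul_eq_of_finrank_span_le_one {ι K V : Type*} [Finite ι] [Field K]
    [AddCommGroup V] [Module K V] {f : ι → V}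
    (h : Module.finrank K (Submodule.span K (Set.range f)) ≤ 1) :
    ∃ (c : ι → K) (v : V), ∀ ℓ, f ℓ = c ℓ • v := by
  have := FiniteDimensional.span_of_finite K (Set.finite_range f)
  obtain ⟨v, hv⟩ := finrank_le_one_iff.mp h
  choose c hc using fun ℓ => hv ⟨f ℓ, Submodule.subset_span ⟨ℓ, rfl⟩⟩
  exact ⟨c, v, fun ℓ => (congrArg Subtype.val (hc ℓ)).symm⟩

theorem exists_apply_ne_zero_of_span_eq_top {ι κ K : Type*} [Field K] {f : ι → κ → K}
    (h : Submodule.span K (Set.range f) = ⊤) (p : κ) : ∃ ℓ, f ℓ p ≠ 0 := by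
  by_contra! hzero
  have hle : Submodule.span K (Set.range f) ≤ LinearMap.ker (LinearMap.proj p) :=
    Submodule.span_le.mpr (Set.range_subset_iff.mpr hzero)
  rw [h] at hle
  classical
  simpa using hle (Submodule.mem_top (x := Pi.single p 1))

namespace PiggyDual

variable {n k : ℕ} {K : Type*} [Field K] [Fintype K] {G : Matrix (Fin k) (Fin n) K}

section

variable {m : ℕ} {P : Fin m → Fin m → Matrix (Fin k) (Fin n) K}

theorem sum_smul {ι : Type*} [Fintype ι] {W : ι → Matrix (Fin n) (Fin m) K}
    (hW : ∀ ℓ, PiggyDual G P (W ℓ)) (a : ι → K) : PiggyDual G P (∑ ℓ, a ℓ • W ℓ) := by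
  intro p
  have hcol : ∀ q, (fun i => (∑ ℓ, a ℓ • W ℓ) i q) = ∑ ℓ, a ℓ • fun i => W ℓ i q := by
    intro q
    ext i
    simp [Matrix.sum_apply]
  simp only [hcol, mulVec_sum, mulVec_smul]
  rw [sum_comm, ← sum_add_distrib]
  exact sum_eq_zero fun ℓ _ => by rw [← smul_sum, ← smul_add, hW ℓ p, smul_zero]

theorem mulVec_col_eq_zero {V : Matrix (Fin n) (Fin m) K} (hV : PiggyDual G P V) {p : Fin m}
    (hlater : ∀ q, p < q → ∀ i, V i q = 0) : G *ᵥ (fun i => V i p) = 0 := by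
  have hzero : ∀ q ∈ Ioi p, P p q *ᵥ (fun i => V i q) = 0 := fun q hq => by
    rw [show (fun i => V i q) = 0 from funext (hlater q (mem_Ioi.mp hq)), mulVec_zero]
  simpa [sum_eq_zero hzero] using hV p

theorem exists_lt_card_support_col [DecidableEq K] {V : Matrix (Fin n) (Fin m) K}
    (hV : PiggyDual G P V) (hG : IsMDS G) (hkn : k ≤ n) (hne : V ≠ 0) :
    ∃ p, k < #{i | V i p ≠ 0} := by
  obtain ⟨i, q, hiq⟩ : ∃ i q, V i q ≠ 0 := by
    by_contra! h
    exact hne (Matrix.ext h)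
  obtain ⟨p, hp, hmax⟩ := exists_max_image {q | ∃ i, V i q ≠ 0} id ⟨q, by simpa using ⟨i, hiq⟩⟩
  have hlater : ∀ q, p < q → ∀ i, V i q = 0 := fun q hq i => by
    by_contra h
    exact absurd (hmax q (by simpa using ⟨i, h⟩)) (not_le.mpr hq)
  obtain ⟨i, hi⟩ := (mem_filter.mp hp).2
  exact ⟨p, hG.lt_card_support hkn (fun h => hi (congrFun h i)) (hV.mulVec_col_eq_zero hlater)⟩

end

variable [DecidableEq K] {t : ℕ} {P : Fin (t + 1) → Fin (t + 1) → Matrix (Fin k) (Fin n) K}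
  {V : Matrix (Fin n) (Fin (t + 1)) K} (hV : PiggyDual G P V) (hG : IsMDS G) (hkn : k ≤ n)
include hV hG hkn

theorem lt_card_support_last_col (hne : (fun i => V i (Fin.last t)) ≠ 0) :
    k < #{i | V i (Fin.last t) ≠ 0} :=
  hG.lt_card_support hkn hne
    (hV.mulVec_col_eq_zero fun q hq => absurd (Fin.le_last q) (not_le.mpr hq))

theorem card_support_last_col_eq {X : Finset (Fin n)} (hX : #X ≤ k + 1)
    (hVX : ∀ i ∉ X, V i = 0) {i₀ : Fin n} (hi₀ : V i₀ (Fin.last t) ≠ 0) :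
    #{i | V i (Fin.last t) ≠ 0} = k + 1 := by
  refine le_antisymm (le_trans (card_le_card fun i hi => ?_) hX)
    (hV.lt_card_support_last_col hG hkn fun h => hi₀ (congrFun h i₀))
  by_contra hiX
  exact (mem_filter.mp hi).2 (by rw [hVX i hiX]; rfl)

theorem exists_ne_apply_last_ne_zero (hk : 1 ≤ k) {i₀ : Fin n}
    (hi₀ : V i₀ (Fin.last t) ≠ 0) : ∃ i ≠ i₀, V i (Fin.last t) ≠ 0 := by
  by_contra! h
  have hsub : ({i | V i (Fin.last t) ≠ 0} : Finset (Fin n)) ⊆ {i₀} := fun i hi => by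
    by_contra hne
    exact (mem_filter.mp hi).2 (h i (by simpa using hne))
  have hlt := hV.lt_card_support_last_col hG hkn fun h => hi₀ (congrFun h i₀)
  have := hlt.trans_le ((card_le_card hsub).trans (card_singleton i₀).le)
  omega

end PiggyDual

section GeneralPosition

variable {ι K : Type*} [Field K] [DecidableEq K] {m : ℕ}

def InGeneralPosition (S : Finset ι) (c : ι → Fin m → K) : Prop :=
  ∀ a ≠ 0, #{i ∈ S | a ⬝ᵥ c i = 0} < m

variable {S : Finset ι} {c : ι → Fin m → K} {r : Fin m → ι}

theorem InGeneralPosition.isUnit_det (hgen : InGeneralPosition S c) (hr : Function.Injective r)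
    (hrS : ∀ j, r j ∈ S) : IsUnit (Matrix.of fun j => c (r j)).det := by
  classical
  rw [isUnit_iff_ne_zero]
  intro hdet
  obtain ⟨a, ha, hMa⟩ := exists_mulVec_eq_zero_iff.mpr hdet
  have hsub : univ.image r ⊆ {i ∈ S | a ⬝ᵥ c i = 0} := by
    intro i hi
    obtain ⟨j, -, rfl⟩ := mem_image.mp hi
    exact mem_filter.mpr ⟨hrS j, by rw [dotProduct_comm]; exact congrFun hMa j⟩
  have := card_le_card hsub
  rw [card_image_of_injective _ hr, card_univ, Fintype.card_fin] at this
  exact absurd (hgen a ha) (not_lt.mpr this)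

theorem InGeneralPosition.dotProduct_ne_zero (hgen : InGeneralPosition S c)
    (hr : Function.Injective r) (hrS : ∀ j, r j ∈ S) {a : Fin m → K} {j : Fin m}
    (haj : a ⬝ᵥ c (r j) ≠ 0) (ha : ∀ j', j' ≠ j → a ⬝ᵥ c (r j') = 0) {i : ι} (hi : i ∈ S)
    (hir : i ∉ Set.range r) : a ⬝ᵥ c i ≠ 0 := by
  classical
  intro hai
  have hsub : insert i ((univ.erase j).image r) ⊆ {i ∈ S | a ⬝ᵥ c i = 0} := by
    refine insert_subset (mem_filter.mpr ⟨hi, hai⟩) fun i' hi' => ?_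
    obtain ⟨j', hj', rfl⟩ := mem_image.mp hi'
    exact mem_filter.mpr ⟨hrS j', ha j' (ne_of_mem_erase hj')⟩
  have hi' : i ∉ (univ.erase j).image r := fun h => hir <| by
    obtain ⟨j', -, rfl⟩ := mem_image.mp h
    exact Set.mem_range_self j'
  have hcard := card_le_card hsub
  rw [card_insert_of_notMem hi', card_image_of_injective _ hr, card_erase_of_mem (mem_univ j),
    card_fin] at hcard
  have := hgen a (fun h => haj (by simp [h]))
  have := j.pos
  omega

theorem InGeneralPosition.exists_dual_basis (hgen : InGeneralPosition S c)
    (hr : Function.Injective r) (hrS : ∀ j, r j ∈ S) :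
    ∃ A : Matrix (Fin m) (Fin m) K, IsUnit A.det ∧ (∀ j j', j' ≠ j → A j ⬝ᵥ c (r j') = 0) ∧
      ∀ j, ∀ i ∈ S, i ∉ Set.range r → A j ⬝ᵥ c i ≠ 0 := by
  set M : Matrix (Fin m) (Fin m) K := Matrix.of fun j => c (r j)
  have hM : IsUnit Mᵀ.det := by
    rw [det_transpose]
    exact hgen.isUnit_det hr hrS
  have hdual : ∀ j j', Mᵀ⁻¹ j ⬝ᵥ c (r j') = if j = j' then 1 else 0 := fun j j' => by
    rw [← one_apply, ← nonsing_inv_mul Mᵀ hM]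
    rfl
  refine ⟨Mᵀ⁻¹, isUnit_nonsing_inv_det _ hM, fun j j' hj' => by rw [hdual, if_neg hj'.symm],
    fun j i hi hir => hgen.dotProduct_ne_zero hr hrS (j := j) (by simp [hdual])
      (fun j' hj' => by rw [hdual, if_neg hj'.symm]) hi hir⟩

end GeneralPosition

section RepairScheme

variable {ι K : Type*} [Fintype ι] [Field K] {n k t : ℕ}
  {G : Matrix (Fin k) (Fin n) K} {P : Fin (t + 1) → Fin (t + 1) → Matrix (Fin k) (Fin n) K}
  {W : ι → Matrix (Fin n) (Fin (t + 1)) K} {istar : Fin n} {S : Finset (Fin n)}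
  {c : Fin n → ι → K} {v : Fin n → Fin (t + 1) → K}
  (hsupp : ∀ (j) (i : Fin n), i ∉ S → i ≠ istar → W j i = 0)
  (hcv : ∀ i ∈ S, ∀ ℓ, W ℓ i = c i ℓ • v i)

include hcv in
theorem sum_smul_apply_of_mem (a : ι → K) {i : Fin n} (hi : i ∈ S) :
    (∑ ℓ, a ℓ • W ℓ) i = (a ⬝ᵥ c i) • v i := by
  simp only [Matrix.sum_smul_apply, hcv i hi, smul_smul, dotProduct, sum_smul]

include hsupp hcv in
theorem sum_smul_apply_eq_zero (a : ι → K) {i : Fin n} (hi : i ≠ istar)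
    (ha : i ∈ S → a ⬝ᵥ c i = 0) : (∑ ℓ, a ℓ • W ℓ) i = 0 := by
  by_cases hiS : i ∈ S
  · rw [sum_smul_apply_of_mem hcv a hiS, ha hiS, zero_smul]
  · simp [Matrix.sum_smul_apply, hsupp _ i hiS hi]

variable [Fintype K] [DecidableEq K] (hG : IsMDS G) (hkn : k ≤ n)
  (hdual : ∀ j, PiggyDual G P (W j))
include hsupp hcv hG hkn hdual

theorem card_filter_dotProduct_eq_zero_add_le (hindep : LinearIndependent K fun ℓ => W ℓ istar)
    {a : ι → K} (ha : a ≠ 0) : #{i ∈ S | a ⬝ᵥ c i = 0} + k ≤ #S := by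
  have hne : ∑ ℓ, a ℓ • W ℓ ≠ 0 := fun h => ha <| funext <|
    Fintype.linearIndependent_iff.mp hindep a (by rw [← Matrix.sum_smul_apply, h]; rfl)
  obtain ⟨p, hp⟩ := (PiggyDual.sum_smul hdual a).exists_lt_card_support_col hG hkn hne
  have hsub : ({i | (∑ ℓ, a ℓ • W ℓ) i p ≠ 0} : Finset (Fin n)) ⊆
      insert istar {i ∈ S | a ⬝ᵥ c i ≠ 0} := by
    intro i hi
    by_contra hmem
    simp only [mem_insert, mem_filter, not_or, not_and_not_right] at hmem
    exact (mem_filter.mp hi).2 (by rw [sum_smul_apply_eq_zero hsupp hcv a hmem.1 hmem.2]; rfl)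
  have := (card_le_card hsub).trans (card_insert_le _ _)
  have := card_filter_add_card_filter_not (s := S) (fun i => a ⬝ᵥ c i = 0)
  simp only [← ne_eq] at this
  omega

omit [Fintype ι] in
theorem exists_mem_apply_last_ne_zero (hk : 1 ≤ k) {ℓ : ι}
    (hℓ : W ℓ istar (Fin.last t) ≠ 0) : ∃ i ∈ S, v i (Fin.last t) ≠ 0 := by
  obtain ⟨i, hi, hWi⟩ := (hdual ℓ).exists_ne_apply_last_ne_zero hG hkn hk hℓ
  have hiS : i ∈ S := by_contra fun h => hWi (by rw [hsupp ℓ i h hi]; rfl)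
  exact ⟨i, hiS, fun h => hWi (by simp [hcv i hiS, h])⟩

theorem card_support_sum_smul_last_col_eq {a : ι → K} {X : Finset (Fin n)} (hX : #X ≤ k)
    (ha : ∀ i ∈ S, i ∉ X → a ⬝ᵥ c i = 0) {i₀ : Fin n} (hi₀ : i₀ ∈ S) (hai₀ : a ⬝ᵥ c i₀ ≠ 0)
    (hvi₀ : v i₀ (Fin.last t) ≠ 0) : #{i | (∑ ℓ, a ℓ • W ℓ) i (Fin.last t) ≠ 0} = k + 1 := by
  refine (PiggyDual.sum_smul hdual a).card_support_last_col_eq hG hkn (X := insert istar X)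
    ((card_insert_le _ _).trans (by omega)) (fun i hi => ?_) (i₀ := i₀) ?_
  · rw [mem_insert, not_or] at hi
    exact sum_smul_apply_eq_zero hsupp hcv a hi.1 fun hiS => ha i hiS hi.2
  · simp [sum_smul_apply_of_mem hcv a hi₀, hai₀, hvi₀]

end RepairScheme

theorem standard_form_general {n t k : ℕ} (K : Type*) [Field K] [Fintype K] [DecidableEq K]
    (hk : 2 ≤ k)
    (G : Matrix (Fin k) (Fin n) K) (hMDS : IsMDS G)
    (P : Fin (t + 1) → Fin (t + 1) → Matrix (Fin k) (Fin n) K)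
    (istar : Fin n) (S : Finset (Fin n)) (hS : S.card = k + t)
    (W : Fin (t + 1) → Matrix (Fin n) (Fin (t + 1)) K)
    (hdual : ∀ j, PiggyDual G P (W j))
    (hsupp : ∀ (j) (i : Fin n), i ∉ S → i ≠ istar → W j i = 0)
    (hfull : Module.finrank K
      (Submodule.span K (Set.range fun j => W j istar)) = t + 1)
    (hdim : ∀ i ∈ S,
      Module.finrank K (Submodule.span K (Set.range fun j => W j i)) = 1) :
    ∃ A : Matrix (Fin (t + 1)) (Fin (t + 1)) K, IsUnit A.det ∧
      ∃ (T : Finset (Fin n)) (r : Fin (t + 1) → Fin n),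
        T ⊆ S ∧ T.card = k - 1 ∧ Function.Injective r ∧
        (∀ j, r j ∈ S ∧ r j ∉ T) ∧
        (∀ i ∈ S, i ∈ T ∨ ∃ j, r j = i) ∧
        (∀ (j) (i : Fin n), i ∉ T → i ≠ r j → i ≠ istar →
          (∑ ℓ, A j ℓ • W ℓ) i = 0) ∧
        (∀ j, (Finset.univ.filter
          fun i : Fin n => (∑ ℓ, A j ℓ • W ℓ) i (Fin.last t) ≠ 0).card = k + 1) := by
  have hkn : k ≤ n := (Nat.le_add_right k t).trans (by simpa [hS] using S.card_le_univ)
  have hspan : Submodule.span K (Set.range fun j => W j istar) = ⊤ :=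
    Submodule.eq_top_of_finrank_eq (by rw [hfull, Module.finrank_fin_fun])
  have hindep : LinearIndependent K fun j => W j istar :=
    linearIndependent_iff_card_eq_finrank_span.mpr (by simp [Set.finrank, hfull])
  choose! c v hcv using fun i hi => exists_smul_eq_of_finrank_span_le_one (hdim i hi).le
  have hgen : InGeneralPosition S c := fun a ha => by
    have := card_filter_dotProduct_eq_zero_add_le hsupp hcv hMDS hkn hdual hindep ha
    omega
  obtain ⟨ℓ, hℓ⟩ := exists_apply_ne_zero_of_span_eq_top hspan (Fin.last t)
  obtain ⟨i₀, hi₀, hvi₀⟩ :=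
    exists_mem_apply_last_ne_zero hsupp hcv hMDS hkn hdual (by omega) hℓ
  obtain ⟨r, hr⟩ := Function.Embedding.exists_of_card_le_finset (α := Fin (t + 1))
    (s := S.erase i₀) (by rw [Fintype.card_fin, card_erase_of_mem hi₀]; omega)
  have hrS : ∀ j, r j ∈ S := fun j => mem_of_mem_erase (hr ⟨j, rfl⟩)
  have hi₀r : i₀ ∉ Set.range r := fun h => notMem_erase i₀ S (hr h)
  obtain ⟨A, hA, hAr, hAS⟩ := hgen.exists_dual_basis r.injective hrS
  set T := S \ univ.map r
  have hvanish : ∀ j, ∀ i ∈ S, i ∉ insert (r j) T → A j ⬝ᵥ c i = 0 := by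
    intro j i hiS hi
    obtain ⟨j', rfl⟩ : ∃ j', r j' = i := by simpa [T, hiS] using fun h => hi (mem_insert_of_mem h)
    exact hAr j j' (by rintro rfl; simp at hi)
  have hT : #T = k - 1 := by
    rw [card_sdiff_of_subset (by simpa [subset_iff] using hrS), hS, card_map, card_fin]
    omega
  refine ⟨A, hA, T, r, sdiff_subset, hT, r.injective, fun j => ⟨hrS j, by simp [T]⟩,
    fun i hi => ?_, fun j i hiT hir hi => sum_smul_apply_eq_zero hsupp hcv (A j) hi
      fun hiS => hvanish j i hiS (by simp [hiT, hir]),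
    fun j => card_support_sum_smul_last_col_eq hsupp hcv hMDS hkn hdual
      ((card_insert_le _ _).trans (by omega)) (hvanish j) hi₀ (hAS j i₀ hi₀ hi₀r) hvi₀⟩
  by_cases h : ∃ j, r j = i
  exacts [Or.inr h, Or.inl (by simp_all [T])]

/-- any perfect-bandwidth repair scheme for a piggybacking code with
`t+1 ≥ 2` substripes is equivalent, via an invertible linear combination `A` of the
repair matrices, to a scheme in standard form: `S` is partitioned into a set `T` of
`k-1` rows shared by all repair matrices together with rows `r_0, …, r_t`, where the
`j`-th new repair matrix is supported on `T ∪ {r_j, i*}`, and the last column of each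
new repair matrix has exactly `k+1` nonzero entries. -/
theorem standard_form {n t k : ℕ} (K : Type*) [Field K] [Fintype K] [DecidableEq K]
    (hk : 2 ≤ k) (ht : 1 ≤ t)
    (G : Matrix (Fin k) (Fin n) K) (hMDS : IsMDS G)
    (P : Fin (t + 1) → Fin (t + 1) → Matrix (Fin k) (Fin n) K)
    (istar : Fin n) (S : Finset (Fin n)) (hiS : istar ∉ S) (hS : S.card = k + t)
    (W : Fin (t + 1) → Matrix (Fin n) (Fin (t + 1)) K)
    (hdual : ∀ j, PiggyDual G P (W j))
    (hsupp : ∀ (j) (i : Fin n), i ∉ S → i ≠ istar → W j i = 0)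
    (hfull : Module.finrank K
      (Submodule.span K (Set.range fun j => W j istar)) = t + 1)
    (hdim : ∀ i ∈ S,
      Module.finrank K (Submodule.span K (Set.range fun j => W j i)) = 1) :
    ∃ A : Matrix (Fin (t + 1)) (Fin (t + 1)) K, IsUnit A.det ∧
      ∃ (T : Finset (Fin n)) (r : Fin (t + 1) → Fin n),
        T ⊆ S ∧ T.card = k - 1 ∧ Function.Injective r ∧
        (∀ j, r j ∈ S ∧ r j ∉ T) ∧
        (∀ i ∈ S, i ∈ T ∨ ∃ j, r j = i) ∧
        (∀ (j) (i : Fin n), i ∉ T → i ≠ r j → i ≠ istar →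
          (∑ ℓ, A j ℓ • W ℓ) i = 0) ∧
        (∀ j, (Finset.univ.filter
          fun i : Fin n => (∑ ℓ, A j ℓ • W ℓ) i (Fin.last t) ≠ 0).card = k + 1) :=
  standard_form_general K hk G hMDS P istar S hS W hdual hsupp hfull hdim
end

section
/- For k ≥ 3, no (n,k) piggybacking code over any finite field F_q with t substripes can have two linear repair schemes of bandwidth k+t−1 for two distinct failed nodes i*_W ≠ i*_V whose repair matrices have the same set of k+t nonzero rows. -/
open Matrix

/-!
Normalise a bandwidth-`(k+t-1)` repair scheme for node `i★` to a linear map `x ↦ W x` from `Fᵗ`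
to dual matrices whose row `i★` is `x`; every other row `i ∈ R` is then a multiple of a fixed
direction `uᵢ`. Let `L` be the set of rows whose direction has last entry `0`. The last column of
`W x` is a dual codeword (nothing lies to its right), supported on `R \ L`, so the last-column map
has rank at most `t - |L|`; on its kernel the rows outside `L ∪ {i★}` vanish, and the MDS property
bounds the kernel by `|L| + 1 - k`. Since `k ≥ 2` this forces the last-column map to be injective,
hence an isomorphism onto the `t`-dimensional space of dual codewords supported on `R`.

Given two schemes `W`, `V` on the same `R`, match `W x` with the `V y` having the same last column
`z`. Then `W x - V y` is dual with zero last column, so its column `t-2` is a dual codeword `ℓ z`,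
and on the `k+t-2 ≥ t+1` rows of `R` other than `i_W, i_V` it equals `dᵢ zᵢ` for constants `dᵢ`.
For an MDS code this forces `ℓ z = c • z`. At row `i_W` with `x = e_{t-2}` this reads `1 = 0`.
-/

open Module

theorem Submodule.finrank_le_card_of_forall_eq_zero {K E ι : Type*} [Field K] [AddCommGroup E]
    [Module K E] (S : Submodule K E) (Y : Finset ι) (g : ι → E →ₗ[K] K)
    (h : ∀ x ∈ S, (∀ i ∈ Y, g i x = 0) → x = 0) : finrank K S ≤ Y.card := by
  let φ : S →ₗ[K] (Y → K) := LinearMap.pi fun i => (g i).comp S.subtype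
  have hφ : Function.Injective φ := by
    rw [← LinearMap.ker_eq_bot, LinearMap.ker_eq_bot']
    intro x hx
    exact Subtype.ext <| h x x.2 fun i hi => congrFun hx ⟨i, hi⟩
  simpa using LinearMap.finrank_le_finrank_of_injective hφ

theorem Submodule.exists_ne_zero_forall_eq_zero_of_card_lt {K ι : Type*} [Field K]
    (S : Submodule K (ι → K)) {A : Finset ι} (hA : A.card < finrank K S) :
    ∃ z ∈ S, z ≠ 0 ∧ ∀ i ∈ A, z i = 0 := by
  by_contra h
  refine (S.finrank_le_card_of_forall_eq_zero A (fun i => LinearMap.proj i)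
    fun z hz hAz => ?_).not_gt hA
  by_contra hne
  exact h ⟨z, hz, hne, hAz⟩

theorem Finset.le_one_of_sum_le_card {ι : Type*} {s : Finset ι} {g : ι → ℕ}
    (hg : ∀ i ∈ s, 1 ≤ g i) (hsum : ∑ i ∈ s, g i ≤ s.card) {i : ι} (hi : i ∈ s) : g i ≤ 1 := by
  classical
  have hrest : (s.erase i).card • 1 ≤ ∑ l ∈ s.erase i, g l :=
    Finset.card_nsmul_le_sum _ _ _ fun l hl => hg l (Finset.mem_of_mem_erase hl)
  rw [← Finset.add_sum_erase s g hi] at hsum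
  have := Finset.card_erase_add_one hi
  simp only [smul_eq_mul, mul_one] at hrest
  omega

section

variable {n k t : ℕ} {K : Type*} [Field K]

def dualCodeOn (G : Matrix (Fin k) (Fin n) K) (R : Finset (Fin n)) : Submodule K (Fin n → K) where
  carrier := {z | G *ᵥ z = 0 ∧ ∀ i ∉ R, z i = 0}
  zero_mem' := by simp
  add_mem' := by
    rintro a b ⟨ha, ha'⟩ ⟨hb, hb'⟩
    exact ⟨by simp [Matrix.mulVec_add, ha, hb], fun i hi => by simp [ha' i hi, hb' i hi]⟩
  smul_mem' := by
    rintro c a ⟨ha, ha'⟩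
    exact ⟨by simp [Matrix.mulVec_smul, ha], fun i hi => by simp [ha' i hi]⟩

theorem mem_dualCodeOn_sdiff {G : Matrix (Fin k) (Fin n) K} {R A : Finset (Fin n)}
    {z : Fin n → K} (hz : z ∈ dualCodeOn G R) (hA : ∀ i ∈ A, z i = 0) :
    z ∈ dualCodeOn G (R \ A) := by
  refine ⟨hz.1, fun i hi => ?_⟩
  rw [Finset.mem_sdiff, not_and_or, not_not] at hi
  exact hi.elim (hz.2 i) (hA i)

namespace IsMDS

variable {G : Matrix (Fin k) (Fin n) K} {R B : Finset (Fin n)}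

theorem eq_zero_of_mem_dualCodeOn (hG : IsMDS G) (hkn : k ≤ n) (hR : R.card ≤ k)
    {z : Fin n → K} (hz : z ∈ dualCodeOn G R) : z = 0 := by
  obtain ⟨s, hRs, hs⟩ := Finset.exists_superset_card_eq hR (by simpa using hkn)
  have hzs : ∀ i ∉ s, z i = 0 := fun i hi => hz.2 i fun h => hi (hRs h)
  have hsum : ∑ j : s, z j • (fun r => G r j) = 0 := by
    ext r
    have hr := congrFun hz.1 r
    simp only [Matrix.mulVec, dotProduct, Pi.zero_apply] at hr
    rw [← Finset.sum_subset (Finset.subset_univ s) fun i _ hi => by simp [hzs i hi]] at hr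
    simpa [Finset.sum_apply, mul_comm, ← Finset.sum_coe_sort s] using hr
  have hcoef := Fintype.linearIndependent_iff.mp (hG s hs) _ hsum
  funext i
  by_cases hi : i ∈ s
  · exact hcoef ⟨i, hi⟩
  · exact hzs i hi

theorem eq_zero_of_forall_eq_zero (hG : IsMDS G) (hkn : k ≤ n) {A : Finset (Fin n)}
    (hAR : A ⊆ R) (hcard : R.card ≤ k + A.card) {z : Fin n → K} (hz : z ∈ dualCodeOn G R)
    (hzA : ∀ i ∈ A, z i = 0) : z = 0 :=
  hG.eq_zero_of_mem_dualCodeOn hkn (by rw [Finset.card_sdiff_of_subset hAR]; omega)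
    (mem_dualCodeOn_sdiff hz hzA)

theorem finrank_dualCodeOn_le (hG : IsMDS G) (hkn : k ≤ n) (R : Finset (Fin n)) :
    finrank K (dualCodeOn G R) ≤ R.card - k := by
  obtain ⟨A, hAR, hA⟩ := Finset.exists_subset_card_eq (Nat.sub_le R.card k)
  exact hA ▸ Submodule.finrank_le_card_of_forall_eq_zero _ A (fun i => LinearMap.proj i)
    fun z hz hzA => hG.eq_zero_of_forall_eq_zero hkn hAR (by omega) hz hzA

/- A nonzero dual codeword `z` vanishing on `t - 1` points of `B` is supported on exactly `k + 1`
points, on which the dual codewords form the line `K ∙ z`; both `ℓ z` and `z` lie on it. -/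
theorem eq_of_apply_eq_mul (hG : IsMDS G) (hkn : k ≤ n) (ht : 1 ≤ t) (hR : R.card = k + t)
    (hC : t ≤ finrank K (dualCodeOn G R)) (hBR : B ⊆ R) (hB : t + 1 ≤ B.card)
    {ℓ : (Fin n → K) → Fin n → K} {d : Fin n → K}
    (hℓ : ∀ z ∈ dualCodeOn G R, ℓ z ∈ dualCodeOn G R)
    (hℓd : ∀ z ∈ dualCodeOn G R, ∀ i ∈ B, ℓ z i = d i * z i)
    {i₁ i₂ : Fin n} (hi₁ : i₁ ∈ B) (hi₂ : i₂ ∈ B) : d i₁ = d i₂ := by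
  rcases eq_or_ne i₁ i₂ with rfl | hne
  · rfl
  have hcard : t - 1 ≤ ((B.erase i₁).erase i₂).card := by
    rw [Finset.card_erase_of_mem (Finset.mem_erase.mpr ⟨hne.symm, hi₂⟩),
      Finset.card_erase_of_mem hi₁]
    omega
  obtain ⟨A, hA, hAcard⟩ := Finset.exists_subset_card_eq hcard
  have hAB : A ⊆ B := hA.trans ((Finset.erase_subset _ _).trans (Finset.erase_subset _ _))
  have hi₁A : i₁ ∉ A := fun h => by simpa using hA h
  have hi₂A : i₂ ∉ A := fun h => by simpa using hA h
  have hzero : ∀ w ∈ dualCodeOn G R, ∀ i ∈ B, i ∉ A → w i = 0 → (∀ l ∈ A, w l = 0) → w = 0 :=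
    fun w hw i hi hiA hwi hwA => hG.eq_zero_of_forall_eq_zero hkn
      (Finset.insert_subset (hBR hi) (hAB.trans hBR))
      (by rw [Finset.card_insert_of_notMem hiA]; omega) hw
      (Finset.forall_mem_insert _ _ _ |>.mpr ⟨hwi, hwA⟩)
  obtain ⟨z, hz, hz0, hzA⟩ :=
    (dualCodeOn G R).exists_ne_zero_forall_eq_zero_of_card_lt (A := A) (by omega)
  have hz₁ : z i₁ ≠ 0 := fun h => hz0 (hzero z hz i₁ hi₁ hi₁A h hzA)
  have hz₂ : z i₂ ≠ 0 := fun h => hz0 (hzero z hz i₂ hi₂ hi₂A h hzA)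
  have hw : z i₁ • ℓ z - ℓ z i₁ • z = 0 := by
    refine hzero _ (sub_mem (Submodule.smul_mem _ _ (hℓ z hz)) (Submodule.smul_mem _ _ hz))
      i₁ hi₁ hi₁A (by simp [mul_comm]) fun l hl => ?_
    simp [hℓd z hz l (hAB hl), hzA l hl]
  have h₂ := congrFun hw i₂
  simp only [Pi.sub_apply, Pi.smul_apply, smul_eq_mul, Pi.zero_apply, hℓd z hz _ hi₁,
    hℓd z hz _ hi₂] at h₂
  have : z i₁ * z i₂ * (d i₂ - d i₁) = 0 := by linear_combination h₂
  simpa [hz₁, hz₂, sub_eq_zero, eq_comm] using this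

theorem exists_eq_smul_of_apply_eq_mul (hG : IsMDS G) (hkn : k ≤ n) (ht : 1 ≤ t)
    (hR : R.card = k + t) (hC : t ≤ finrank K (dualCodeOn G R)) (hBR : B ⊆ R)
    (hB : t + 1 ≤ B.card) (hRB : R.card ≤ k + B.card)
    {ℓ : (Fin n → K) → Fin n → K} {d : Fin n → K}
    (hℓ : ∀ z ∈ dualCodeOn G R, ℓ z ∈ dualCodeOn G R)
    (hℓd : ∀ z ∈ dualCodeOn G R, ∀ i ∈ B, ℓ z i = d i * z i) :
    ∃ c : K, ∀ z ∈ dualCodeOn G R, ℓ z = c • z := by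
  obtain ⟨i₀, hi₀⟩ : B.Nonempty := Finset.card_pos.mp (by omega)
  refine ⟨d i₀, fun z hz => sub_eq_zero.mp ?_⟩
  refine hG.eq_zero_of_forall_eq_zero hkn hBR hRB
    (sub_mem (hℓ z hz) (Submodule.smul_mem _ _ hz)) fun i hi => ?_
  simp [hℓd z hz i hi, hG.eq_of_apply_eq_mul hkn ht hR hC hBR hB hℓ hℓd hi hi₀]

end IsMDS

theorem finrank_span_row_le_one {R : Finset (Fin n)} {i₀ : Fin n} (hR : R.card = k + t)
    (hi₀ : i₀ ∈ R) (W : Fin t → Matrix (Fin n) (Fin t) K) (hsupp : ∀ i ∈ R, ∃ j, W j i ≠ 0)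
    (hbw : ∑ i ∈ R.erase i₀, finrank K (Submodule.span K (Set.range fun j => W j i)) ≤
      k + t - 1) {i : Fin n} (hi : i ∈ R.erase i₀) :
    finrank K (Submodule.span K (Set.range fun j => W j i)) ≤ 1 := by
  refine Finset.le_one_of_sum_le_card
    (g := fun l => finrank K (Submodule.span K (Set.range fun j => W j l))) (fun l hl => ?_)
    (by simpa [hR, Finset.card_erase_of_mem hi₀]) hi
  obtain ⟨j, hj⟩ := hsupp l (Finset.mem_of_mem_erase hl)
  exact Submodule.one_le_finrank_iff.mpr fun hbot =>
    hj (Submodule.span_eq_bot.mp hbot _ ⟨j, rfl⟩)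

variable [Fintype K]

section PiggyDual

variable {G : Matrix (Fin k) (Fin n) K} {P : Fin t → Fin t → Matrix (Fin k) (Fin n) K}

variable (G P) in
def piggyDualSubmodule : Submodule K (Matrix (Fin n) (Fin t) K) where
  carrier := {M | PiggyDual G P M}
  zero_mem' i := by
    have hcol : ∀ j, (fun r => (0 : Matrix (Fin n) (Fin t) K) r j) = 0 := fun _ => rfl
    simp only [hcol, Matrix.mulVec_zero, Finset.sum_const_zero, add_zero]
  add_mem' {A B} hA hB i := by
    have hcol : ∀ j, (fun r => (A + B) r j) = (fun r => A r j) + fun r => B r j := fun _ => rfl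
    simp only [hcol, Matrix.mulVec_add, Finset.sum_add_distrib]
    rw [add_add_add_comm, hA i, hB i, add_zero]
  smul_mem' c A hA i := by
    have hcol : ∀ j, (fun r => (c • A) r j) = c • fun r => A r j := fun _ => rfl
    simp only [hcol, Matrix.mulVec_smul, ← Finset.smul_sum, ← smul_add, hA i, smul_zero]

theorem PiggyDual.mulVec_col_eq_zero_s13 {M : Matrix (Fin n) (Fin t) K} (hM : PiggyDual G P M)
    {j : Fin t} (hzero : ∀ l, j < l → ∀ i, M i l = 0) : G *ᵥ (fun i => M i j) = 0 := by
  have h := hM j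
  rwa [Finset.sum_eq_zero fun l hl => ?_, add_zero] at h
  rw [show (fun i => M i l) = 0 from funext (hzero l (Finset.mem_Ioi.mp hl)),
    Matrix.mulVec_zero]

theorem PiggyDual.eq_zero_of_card_le (hG : IsMDS G) (hkn : k ≤ n)
    {M : Matrix (Fin n) (Fin t) K} (hM : PiggyDual G P M) {Y : Finset (Fin n)}
    (hY : Y.card ≤ k) (hMY : ∀ i ∉ Y, M i = 0) : M = 0 := by
  suffices hcol : ∀ j i, M i j = 0 from Matrix.ext fun i j => hcol j i
  intro j
  induction j using WellFoundedGT.induction with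
  | _ j ih =>
    exact congrFun (hG.eq_zero_of_mem_dualCodeOn hkn hY
      ⟨hM.mulVec_col_eq_zero_s13 ih, fun i hi => by simp [hMY i hi]⟩)

end PiggyDual

/- A bandwidth-`(k+t-1)` repair scheme for node `i₀` with support `R`, reparametrised by its row
`i₀`: `toLin x` is the combination of the scheme's `t` dual matrices whose row `i₀` is `x`. -/
structure RepairScheme (G : Matrix (Fin k) (Fin n) K)
    (P : Fin t → Fin t → Matrix (Fin k) (Fin n) K) (R : Finset (Fin n)) (i₀ : Fin n) where
  toLin : (Fin t → K) →ₗ[K] Matrix (Fin n) (Fin t) K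
  dual : ∀ x, PiggyDual G P (toLin x)
  apply_eq_zero : ∀ x, ∀ i ∉ R, toLin x i = 0
  apply_self : ∀ x, toLin x i₀ = x
  coeff : Fin n → (Fin t → K) →ₗ[K] K
  dir : Fin n → Fin t → K
  apply_of_ne : ∀ i ∈ R, i ≠ i₀ → ∀ x, toLin x i = coeff i x • dir i

namespace RepairScheme

variable {G : Matrix (Fin k) (Fin n) K} {P : Fin t → Fin t → Matrix (Fin k) (Fin n) K}
  {R : Finset (Fin n)} {i₀ iW iV : Fin n} (S : RepairScheme G P R i₀)

def col (j : Fin t) : (Fin t → K) →ₗ[K] (Fin n → K) where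
  toFun x i := S.toLin x i j
  map_add' x y := by ext; simp
  map_smul' c x := by ext; simp

@[simp]
theorem col_apply (j : Fin t) (x : Fin t → K) (i : Fin n) : S.col j x i = S.toLin x i j := rfl

theorem col_mem_dualCodeOn {j : Fin t} (hj : IsTop j) (x : Fin t → K) :
    S.col j x ∈ dualCodeOn G R :=
  ⟨(S.dual x).mulVec_col_eq_zero_s13 fun l hl => absurd (hj l) (not_le.mpr hl),
    fun i hi => by simp [S.apply_eq_zero x i hi]⟩

theorem col_apply_eq_zero_of_dir {j : Fin t} {i : Fin n} (hi : i ∈ R) (hne : i ≠ i₀)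
    (hdir : S.dir i j = 0) (x : Fin t → K) : S.col j x i = 0 := by
  simp [S.apply_of_ne i hi hne, hdir]

/- On the kernel, every row `i ≠ i₀` whose direction has nonzero `j`-th entry vanishes, so by the
MDS property the matrix is determined by its coefficients on all but `k - 1` of the other rows. -/
open Classical in
theorem finrank_ker_col_le (hG : IsMDS G) (hkn : k ≤ n) (hk : 1 ≤ k) (j : Fin t) :
    finrank K (LinearMap.ker (S.col j)) ≤
      ((R.erase i₀).filter fun i => S.dir i j = 0).card + 1 - k := by
  set L := (R.erase i₀).filter fun i => S.dir i j = 0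
  obtain ⟨Y, hYL, hY⟩ := Finset.exists_subset_card_eq (show L.card + 1 - k ≤ L.card by omega)
  refine hY ▸ Submodule.finrank_le_card_of_forall_eq_zero _ Y S.coeff fun x hx hYx => ?_
  rw [← S.apply_self x, (S.dual x).eq_zero_of_card_le hG hkn (Y := insert i₀ (L \ Y)) ?_ ?_]
  · rfl
  · calc (insert i₀ (L \ Y)).card ≤ (L \ Y).card + 1 := Finset.card_insert_le _ _
      _ = L.card - Y.card + 1 := by rw [Finset.card_sdiff_of_subset hYL]
      _ ≤ k := by omega
  · intro i hi
    simp only [Finset.mem_insert, Finset.mem_sdiff, not_or, not_and_or, not_not] at hi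
    obtain ⟨hne, hiL⟩ := hi
    by_cases hiR : i ∈ R
    · rw [S.apply_of_ne i hiR hne]
      suffices S.coeff i x = 0 by simp [this]
      by_cases hdir : S.dir i j = 0
      · exact hiL.elim (fun h => absurd (by simp [L, hiR, hne, hdir]) h) (hYx i)
      · have hcol : S.col j x i = 0 := congrFun (LinearMap.mem_ker.mp hx) i
        simpa [S.apply_of_ne i hiR hne, hdir] using hcol
    · exact S.apply_eq_zero x i hiR

open Classical in
theorem finrank_range_col_le (hG : IsMDS G) (hkn : k ≤ n) (hR : R.card = k + t) {j : Fin t}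
    (hj : IsTop j) : finrank K (LinearMap.range (S.col j)) ≤
      t - ((R.erase i₀).filter fun i => S.dir i j = 0).card := by
  set L := (R.erase i₀).filter fun i => S.dir i j = 0
  have hLR : L ⊆ R := (Finset.filter_subset _ _).trans (Finset.erase_subset _ _)
  have hrange : LinearMap.range (S.col j) ≤ dualCodeOn G (R \ L) := by
    rintro _ ⟨x, rfl⟩
    refine mem_dualCodeOn_sdiff (S.col_mem_dualCodeOn hj x) fun i hi => ?_
    obtain ⟨hi, hdir⟩ := Finset.mem_filter.mp hi
    exact S.col_apply_eq_zero_of_dir (Finset.mem_of_mem_erase hi) (Finset.ne_of_mem_erase hi)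
      hdir x
  have := hG.finrank_dualCodeOn_le hkn (R \ L)
  rw [Finset.card_sdiff_of_subset hLR, hR] at this
  exact (Submodule.finrank_mono hrange).trans (by omega)

theorem col_injective (hG : IsMDS G) (hk : 2 ≤ k) (hR : R.card = k + t) {j : Fin t}
    (hj : IsTop j) : Function.Injective (S.col j) := by
  have hkn : k ≤ n := Nat.le_of_add_right_le (hR ▸ R.card_le_univ.trans_eq (Fintype.card_fin n))
  rw [← LinearMap.ker_eq_bot]
  by_contra hker_ne
  have hker := Submodule.one_le_finrank_iff.mpr hker_ne
  have hrange : 1 ≤ finrank K (LinearMap.range (S.col j)) := by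
    refine Submodule.one_le_finrank_iff.mpr fun hbot => ?_
    have h := congrFun (LinearMap.range_eq_bot.mp hbot ▸ rfl : S.col j (Pi.single j 1) = 0) i₀
    simp [S.apply_self] at h
  have hrank := LinearMap.finrank_range_add_finrank_ker (S.col j)
  rw [Module.finrank_fin_fun] at hrank
  have := S.finrank_range_col_le hG hkn hR hj
  have := S.finrank_ker_col_le hG hkn (by omega) j
  omega

theorem range_col_eq (hG : IsMDS G) (hkn : k ≤ n) (hR : R.card = k + t) {j : Fin t}
    (hj : IsTop j) (hinj : Function.Injective (S.col j)) :
    LinearMap.range (S.col j) = dualCodeOn G R := by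
  refine Submodule.eq_of_le_of_finrank_le ?_ ?_
  · rintro _ ⟨x, rfl⟩
    exact S.col_mem_dualCodeOn hj x
  · rw [LinearMap.finrank_range_of_inj hinj, Module.finrank_fin_fun]
    simpa [hR] using hG.finrank_dualCodeOn_le hkn R

theorem dir_ne_zero (hG : IsMDS G) (hkn : k ≤ n) (hR : R.card = k + t) {j : Fin t}
    (hj : IsTop j) (hinj : Function.Injective (S.col j)) {i : Fin n} (hi : i ∈ R)
    (hne : i ≠ i₀) : S.dir i j ≠ 0 := by
  intro hdir
  have hle : LinearMap.range (S.col j) ≤ dualCodeOn G (R.erase i) := by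
    rintro _ ⟨x, rfl⟩
    rw [← Finset.sdiff_singleton_eq_erase]
    refine mem_dualCodeOn_sdiff (S.col_mem_dualCodeOn hj x) fun l hl => ?_
    rw [Finset.mem_singleton.mp hl]
    exact S.col_apply_eq_zero_of_dir hi hne hdir x
  have := (Submodule.finrank_mono hle).trans (hG.finrank_dualCodeOn_le hkn _)
  rw [LinearMap.finrank_range_of_inj hinj, Module.finrank_fin_fun, Finset.card_erase_of_mem hi,
    hR] at this
  have := j.pos
  omega

theorem apply_eq_mul {j : Fin t} {i : Fin n} (hi : i ∈ R) (hne : i ≠ i₀) (hdir : S.dir i j ≠ 0)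
    (x : Fin t → K) (m : Fin t) : S.toLin x i m = S.dir i m / S.dir i j * S.toLin x i j := by
  simp only [S.apply_of_ne i hi hne, Pi.smul_apply, smul_eq_mul]
  field_simp

theorem nonempty_of_family (hR : R.card = k + t) (hi₀ : i₀ ∈ R)
    (W : Fin t → Matrix (Fin n) (Fin t) K) (hdual : ∀ j, PiggyDual G P (W j))
    (hsupp : ∀ i, (∃ j, W j i ≠ 0) ↔ i ∈ R)
    (hfull : finrank K (Submodule.span K (Set.range fun j => W j i₀)) = t)
    (hbw : ∑ i ∈ R.erase i₀, finrank K (Submodule.span K (Set.range fun j => W j i)) ≤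
      k + t - 1) :
    Nonempty (RepairScheme G P R i₀) := by
  have hind : LinearIndependent K fun j => W j i₀ :=
    linearIndependent_iff_card_eq_finrank_span.mpr (by simpa [Set.finrank] using hfull.symm)
  have hspan : ⊤ ≤ Submodule.span K (Set.range fun j => W j i₀) :=
    (Submodule.eq_top_of_finrank_eq (by simpa using hfull)).ge
  set b := Basis.mk hind hspan
  have hrow : ∀ x i, b.constr K W x i = ∑ j, b.equivFun x j • W j i := by
    intro x i
    rw [Basis.constr_apply_fintype]
    exact Finset.sum_apply i _ _
  have hline : ∀ i, ∃ u a : Fin t → K, i ∈ R → i ≠ i₀ → ∀ j, W j i = a j • u := by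
    intro i
    by_cases hi : i ∈ R ∧ i ≠ i₀
    · obtain ⟨u, hu⟩ := finrank_le_one_iff.mp <| finrank_span_row_le_one hR hi₀ W
        (fun l hl => (hsupp l).mpr hl) hbw (Finset.mem_erase.mpr hi.symm)
      choose a ha using fun j => hu ⟨W j i, Submodule.subset_span ⟨j, rfl⟩⟩
      exact ⟨u, a, fun _ _ j => (congrArg Subtype.val (ha j)).symm⟩
    · exact ⟨0, 0, fun h h' => absurd ⟨h, h'⟩ hi⟩
  choose u a hua using hline
  refine ⟨{
    toLin := b.constr K W
    dual := fun x => ?_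
    apply_eq_zero := fun x i hi => ?_
    apply_self := fun x => ?_
    coeff := fun i => b.constr K (a i)
    dir := u
    apply_of_ne := fun i hi hne x => ?_ }⟩
  · have hle : Submodule.span K (Set.range W) ≤ piggyDualSubmodule G P :=
      Submodule.span_le.mpr (Set.range_subset_iff.mpr hdual)
    exact hle ((b.constr_range K (f := W)) ▸ LinearMap.mem_range_self (b.constr K W) x)
  · have hzero : ∀ j, W j i = 0 := fun j => by_contra fun h => hi ((hsupp i).mp ⟨j, h⟩)
    simp [hrow, hzero]
  · rw [hrow]
    simpa [b, Basis.mk_apply] using b.sum_equivFun x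
  · rw [hrow, Basis.constr_apply_fintype, Finset.sum_smul]
    simp [hua i hi hne, smul_smul]

theorem sub_col_mem_dualCodeOn (SW : RepairScheme G P R iW) (SV : RepairScheme G P R iV)
    {j m : Fin t} (hmj : ∀ l, m < l → l = j) {x y : Fin t → K} (hxy : SW.col j x = SV.col j y) :
    (fun i => SW.toLin x i m - SV.toLin y i m) ∈ dualCodeOn G R := by
  have hdual : PiggyDual G P (SW.toLin x - SV.toLin y) :=
    (piggyDualSubmodule G P).sub_mem (SW.dual x) (SV.dual y)
  refine ⟨hdual.mulVec_col_eq_zero_s13 fun l hl i => ?_, fun i hi => ?_⟩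
  · simpa [hmj l hl, sub_eq_zero] using congrFun hxy i
  · simp [SW.apply_eq_zero x i hi, SV.apply_eq_zero y i hi]

theorem exists_sub_col_eq_smul (SW : RepairScheme G P R iW) (SV : RepairScheme G P R iV)
    (hG : IsMDS G) (hk : 3 ≤ k) (hR : R.card = k + t) (hiWR : iW ∈ R) (hiVR : iV ∈ R)
    (hne : iW ≠ iV) {j m : Fin t} (hj : IsTop j) (hmj : ∀ l, m < l → l = j) :
    ∃ c : K, ∀ x y, SW.col j x = SV.col j y →
      (fun i => SW.toLin x i m - SV.toLin y i m) = c • SW.col j x := by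
  have hkn : k ≤ n := Nat.le_of_add_right_le (hR ▸ R.card_le_univ.trans_eq (Fintype.card_fin n))
  have hWinj := SW.col_injective hG (by omega) hR hj
  have hVinj := SV.col_injective hG (by omega) hR hj
  have hWrange := SW.range_col_eq hG hkn hR hj hWinj
  choose! x hx using fun z (hz : z ∈ dualCodeOn G R) => hWrange ▸ hz
  choose! y hy using fun z (hz : z ∈ dualCodeOn G R) => SV.range_col_eq hG hkn hR hj hVinj ▸ hz
  set B := (R.erase iW).erase iV
  have hBR : B ⊆ R := (Finset.erase_subset _ _).trans (Finset.erase_subset _ _)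
  have hB : B.card + 2 = k + t := by
    rw [Finset.card_erase_of_mem (Finset.mem_erase.mpr ⟨hne.symm, hiVR⟩),
      Finset.card_erase_of_mem hiWR, hR]
    omega
  have hd : ∀ z ∈ dualCodeOn G R, ∀ i ∈ B, SW.toLin (x z) i m - SV.toLin (y z) i m =
      (SW.dir i m / SW.dir i j - SV.dir i m / SV.dir i j) * z i := by
    intro z hz i hi
    have hiW : i ≠ iW := (Finset.mem_erase.mp (Finset.mem_of_mem_erase hi)).1
    have hiV : i ≠ iV := (Finset.mem_erase.mp hi).1
    rw [SW.apply_eq_mul (hBR hi) hiW (SW.dir_ne_zero hG hkn hR hj hWinj (hBR hi) hiW),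
      SV.apply_eq_mul (hBR hi) hiV (SV.dir_ne_zero hG hkn hR hj hVinj (hBR hi) hiV),
      ← SW.col_apply, ← SV.col_apply, hx z hz, hy z hz, sub_mul]
  obtain ⟨c, hc⟩ := hG.exists_eq_smul_of_apply_eq_mul hkn j.pos hR
    (by rw [← hWrange, LinearMap.finrank_range_of_inj hWinj, Module.finrank_fin_fun]) hBR
    (by omega) (by omega)
    (fun z hz => SW.sub_col_mem_dualCodeOn SV hmj ((hx z hz).trans (hy z hz).symm)) hd
  refine ⟨c, fun x' y' hxy => ?_⟩
  have hz := SW.col_mem_dualCodeOn hj x'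
  rw [← hc _ hz, hWinj (hx _ hz), hVinj ((hy _ hz).trans hxy)]

theorem node_eq (SW : RepairScheme G P R iW) (SV : RepairScheme G P R iV) (hG : IsMDS G)
    (hk : 3 ≤ k) (ht : 2 ≤ t) (hR : R.card = k + t) (hiWR : iW ∈ R) (hiVR : iV ∈ R) :
    iW = iV := by
  by_contra hne
  have hkn : k ≤ n := Nat.le_of_add_right_le (hR ▸ R.card_le_univ.trans_eq (Fintype.card_fin n))
  set j : Fin t := ⟨t - 1, by omega⟩
  set m : Fin t := ⟨t - 2, by omega⟩
  have hj : IsTop j := fun l => Fin.le_def.mpr (by simp [j]; omega)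
  have hmj : ∀ l, m < l → l = j := fun l hl => Fin.ext (by simp [Fin.lt_def, m, j] at hl ⊢; omega)
  have hjm : j ≠ m := fun h => by
    have := congrArg Fin.val h
    simp only [m, j] at this
    omega
  obtain ⟨c, hc⟩ := SW.exists_sub_col_eq_smul SV hG hk hR hiWR hiVR hne hj hmj
  have hVinj := SV.col_injective hG (by omega) hR hj
  obtain ⟨y, hy⟩ : SW.col j (Pi.single m 1) ∈ LinearMap.range (SV.col j) :=
    SV.range_col_eq hG hkn hR hj hVinj ▸ SW.col_mem_dualCodeOn hj _
  have hrow := congrFun (hc _ y hy.symm) iW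
  rw [SV.apply_eq_mul hiWR hne (SV.dir_ne_zero hG hkn hR hj hVinj hiWR hne), ← SV.col_apply,
    hy] at hrow
  simp [SW.apply_self, hjm] at hrow

end RepairScheme

end

/-- for `k ≥ 3`, no `(n,k)` piggybacking code with `t` substripes can
have two bandwidth-`(k+t-1)` linear repair schemes for two distinct failed nodes
whose repair matrices have the same set `R` of `k+t` nonzero rows. -/
theorem no_two_schemes_same_support {n t k : ℕ} (K : Type*) [Field K] [Fintype K]
    (hk : 3 ≤ k) (ht : 2 ≤ t)
    (G : Matrix (Fin k) (Fin n) K) (hMDS : IsMDS G)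
    (P : Fin t → Fin t → Matrix (Fin k) (Fin n) K)
    (iW iV : Fin n) (hne : iW ≠ iV)
    (R : Finset (Fin n)) (hR : R.card = k + t) (hiWR : iW ∈ R) (hiVR : iV ∈ R)
    (W V : Fin t → Matrix (Fin n) (Fin t) K)
    (hWdual : ∀ j, PiggyDual G P (W j))
    (hVdual : ∀ j, PiggyDual G P (V j))
    (hWsupp : ∀ i : Fin n, (∃ j, W j i ≠ 0) ↔ i ∈ R)
    (hVsupp : ∀ i : Fin n, (∃ j, V j i ≠ 0) ↔ i ∈ R)
    (hWfull : Module.finrank K (Submodule.span K (Set.range fun j => W j iW)) = t)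
    (hVfull : Module.finrank K (Submodule.span K (Set.range fun j => V j iV)) = t)
    (hWbw : ∑ i ∈ R.erase iW,
      Module.finrank K (Submodule.span K (Set.range fun j => W j i)) ≤ k + t - 1)
    (hVbw : ∑ i ∈ R.erase iV,
      Module.finrank K (Submodule.span K (Set.range fun j => V j i)) ≤ k + t - 1) :
    False := by
  obtain ⟨SW⟩ := RepairScheme.nonempty_of_family hR hiWR W hWdual hWsupp hWfull hWbw
  obtain ⟨SV⟩ := RepairScheme.nonempty_of_family hR hiVR V hVdual hVsupp hVfull hVbw
  exact hne (SW.node_eq SV hMDS hk ht hR hiWR hiVR)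
end

section
/- Let F ∈ F_q^{2×n} generate an MDS code (any 2 columns independent), let 2 ≤ t ≤ n−2, and suppose q is large enough that n·C(n−1, t+1)·(1 − ∏_{i=1}^{t−1}(1 − q^{−i})) < 1. Then there exist piggybacking matrices P^{(0)},…,P^{(t−2)} ∈ F_q^{2×n} such that the resulting linebacking code with t substripes admits, for every failed node i* and every repair set S of size t+1 avoiding i*, a linear repair scheme of bandwidth t+1 (perfect bandwidth). -/
open Matrix

/-- Membership in the dual of the linebacking code with base generator `G`,
piggybacking matrices `P i` (used for `i` different from the last index `last`). -/
def LineDual {n t k : ℕ} {K : Type*} [Field K] [Fintype K]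
    (G : Matrix (Fin k) (Fin n) K) (P : Fin t → Matrix (Fin k) (Fin n) K)
    (last : Fin t) (W : Matrix (Fin n) (Fin t) K) : Prop :=
  G *ᵥ (fun r => W r last) = 0 ∧
  ∀ i : Fin t, i ≠ last →
    G *ᵥ (fun r => W r i) + (P i) *ᵥ (fun r => W r last) = 0

/-!
Since `n / q ≤ n·C(n-1,t+1)·(1 - ∏(1 - q⁻ⁱ)) < 1`, the field has more than `n` elements, so some
`s` avoids every slope `G₁ⱼ / G₀ⱼ`; together with the MDS property this writes the `j`-th column
of `G` as `xⱼ (f + zⱼ u)` with `xⱼ ≠ 0` and `z` injective. Take `P⁽ᶜ⁾` with columns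
`-xⱼ zⱼ^(c+3) u`. For the failed node `w` and any helper `i` there is a rank-one matrix supported
on the rows `i` and `w`, both rows multiples of the moment vector of `(z_w, z_i)`, whose defect
from the dual equations is `x_w u` in the last column and zero elsewhere: independent of `i`. So
the differences of these matrices for the helpers `e₁, …, e_t` and `e₀` are dual codewords.
Every helper row is a multiple of one moment vector, and the rows at `w` are differences of
moment vectors, which are independent by a Vandermonde argument on the `t + 2` distinct nodes
`z_w, z_{e₀}, …, z_{e_t}`.
-/

theorem le_one_sub_prod_one_sub_pow {a : ℝ} (ha₀ : 0 ≤ a) (ha₁ : a ≤ 1) {m : ℕ} (hm : 1 ≤ m) :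
    a ≤ 1 - ∏ i ∈ Finset.Icc 1 m, (1 - a ^ i) := by
  induction m, hm using Nat.le_induction with
  | base => simp
  | succ m hm ih =>
    have hprod : 0 ≤ ∏ i ∈ Finset.Icc 1 m, (1 - a ^ i) :=
      Finset.prod_nonneg fun i _ => sub_nonneg.2 (pow_le_one₀ ha₀ ha₁)
    rw [Finset.prod_Icc_succ_top (by omega)]
    nlinarith [pow_nonneg ha₀ (m + 1)]

theorem lt_of_mul_choose_mul_one_sub_prod_lt_one {n t q : ℕ} (ht : 2 ≤ t) (htn : t + 2 ≤ n)
    (hq : 0 < q)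
    (h : (n : ℝ) * ((n - 1).choose (t + 1)) *
      (1 - ∏ i ∈ Finset.Icc 1 (t - 1), (1 - (q : ℝ)⁻¹ ^ i)) < 1) :
    n < q := by
  have hq' : (1 : ℝ) ≤ q := by exact_mod_cast hq
  have hinv₀ : 0 ≤ (q : ℝ)⁻¹ := inv_nonneg.2 (zero_le_one.trans hq')
  have hinv := le_one_sub_prod_one_sub_pow hinv₀ (inv_le_one_of_one_le₀ hq')
    (show 1 ≤ t - 1 by omega)
  have hchoose : (1 : ℝ) ≤ (n - 1).choose (t + 1) := by
    exact_mod_cast Nat.choose_pos (show t + 1 ≤ n - 1 by omega)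
  have hn : (n : ℝ) * (q : ℝ)⁻¹ < 1 := by
    refine lt_of_le_of_lt ?_ h
    calc (n : ℝ) * (q : ℝ)⁻¹
        ≤ n * 1 * (1 - ∏ i ∈ Finset.Icc 1 (t - 1), (1 - (q : ℝ)⁻¹ ^ i)) := by
          rw [mul_one]; gcongr
      _ ≤ _ := by
          have := hinv₀.trans hinv
          gcongr
  rw [← div_eq_mul_inv, div_lt_one (zero_lt_one.trans_le hq')] at hn
  exact_mod_cast hn

section LinearAlgebra

variable {K : Type*} [Field K]

theorem eq_zero_of_forall_sum_mul_pow_sub_pow_eq_zero {m : ℕ} {ν : Fin m → K} {c : K}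
    (hν : Function.Injective ν) (hc : ∀ k, ν k ≠ c) {a : Fin m → K}
    (h : ∀ M ≤ m, ∑ k, a k * (ν k ^ M - c ^ M) = 0) : a = 0 := by
  have hinj : Function.Injective (Fin.cons c ν : Fin (m + 1) → K) :=
    Fin.cons_injective_iff.2 ⟨fun ⟨k, hk⟩ => hc k hk, hν⟩
  have hv := eq_zero_of_forall_pow_sum_mul_pow_eq_zero
    (v := (Fin.cons (-∑ k, a k) a : Fin (m + 1) → K)) hinj fun M => by
      rw [Fin.sum_univ_succ, ← h M (Nat.lt_succ_iff.1 M.isLt)]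
      simp only [Fin.cons_zero, Fin.cons_succ, neg_mul, Finset.sum_mul, mul_sub,
        Finset.sum_sub_distrib]
      ring
  funext k
  simpa using congrFun hv k.succ

theorem linearIndependent_fin_sub_succ {V : Type*} [AddCommGroup V] [Module K V] {t : ℕ}
    {v : Fin (t + 1) → V}
    (h : ∀ g : Fin (t + 1) → K, ∑ k, g k = 0 → ∑ k, g k • v k = 0 → g = 0) :
    LinearIndependent K fun j : Fin t => v 0 - v j.succ := by
  rw [Fintype.linearIndependent_iff]
  intro γ hγ j
  have hg := h (Fin.cons (∑ j, γ j) (-γ)) (by simp [Fin.sum_univ_succ])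
    (by
      rw [Fin.sum_univ_succ, ← hγ]
      simp only [Fin.cons_zero, Fin.cons_succ, Pi.neg_apply, neg_smul, Finset.sum_neg_distrib,
        Finset.sum_smul, smul_sub, Finset.sum_sub_distrib]
      abel)
  simpa using congrFun hg j.succ

theorem finrank_span_range_eq_one {ι V : Type*} [AddCommGroup V] [Module K V] {f : ι → V}
    {v : V} (hf : ∀ j, f j ∈ K ∙ v) {j₀ : ι} (hj₀ : f j₀ ≠ 0) :
    Module.finrank K (Submodule.span K (Set.range f)) = 1 := by
  obtain ⟨a, ha⟩ := Submodule.mem_span_singleton.1 (hf j₀)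
  have ha0 : a ≠ 0 := by
    rintro rfl
    exact hj₀ (by rw [← ha, zero_smul])
  have hspan : Submodule.span K (Set.range f) = K ∙ f j₀ := by
    refine le_antisymm (Submodule.span_le.2 ?_)
      (Submodule.span_singleton_le_iff_mem _ _ |>.2 (Submodule.subset_span ⟨j₀, rfl⟩))
    rintro _ ⟨j, rfl⟩
    rw [← ha, Submodule.span_singleton_smul_eq (IsUnit.mk0 a ha0)]
    exact hf j
  rw [hspan, finrank_span_singleton hj₀]

end LinearAlgebra

section MDS

variable {K : Type*} [Field K]

theorem IsMDS.smul_add_smul_eq_zero {n : ℕ} {G : Matrix (Fin 2) (Fin n) K} (hG : IsMDS G)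
    {i j : Fin n} (hij : i ≠ j) {a b : K} (h : a • G.col i + b • G.col j = 0) :
    a = 0 ∧ b = 0 := by
  have hpair : LinearIndepOn K G.col (({i, j} : Finset (Fin n)) : Set (Fin n)) :=
    hG _ (Finset.card_pair hij)
  rw [Finset.coe_pair] at hpair
  exact (LinearIndepOn.pair_iff _ hij).1 hpair a b h

theorem IsMDS.col_ne_zero {n : ℕ} {G : Matrix (Fin 2) (Fin n) K} (hG : IsMDS G) (hn : 2 ≤ n)
    (j : Fin n) : G.col j ≠ 0 := by
  have : Nontrivial (Fin n) := Fin.nontrivial_iff_two_le.2 hn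
  obtain ⟨i, hij⟩ := exists_ne j
  intro h0
  exact one_ne_zero (hG.smul_add_smul_eq_zero hij.symm (a := 1) (b := 0) (by simp [h0])).1

theorem IsMDS.exists_eq_mul_add_mul [Fintype K] {n : ℕ} {G : Matrix (Fin 2) (Fin n) K}
    (hG : IsMDS G) (hn : 2 ≤ n) (hq : n < Fintype.card K) :
    ∃ (x z : Fin n → K) (f u : Fin 2 → K), (∀ j, x j ≠ 0) ∧ Function.Injective z ∧
      ∀ ρ j, G ρ j = x j * (f ρ + z j * u ρ) := by
  classical
  obtain ⟨s, -, hs⟩ := Finset.exists_mem_notMem_of_card_lt_card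
    (s := Finset.univ.image fun j => G 1 j / G 0 j) (t := Finset.univ)
    (Finset.card_image_le.trans_lt (by simpa using hq))
  set x : Fin n → K := fun j => G 1 j - s * G 0 j
  have hx (j : Fin n) : x j ≠ 0 := by
    intro hxj
    by_cases h0 : G 0 j = 0
    · refine hG.col_ne_zero hn j (funext fun ρ => ?_)
      fin_cases ρ <;> simp_all [x]
    · refine hs (Finset.mem_image.2 ⟨j, Finset.mem_univ _, ?_⟩)
      rw [div_eq_iff h0]
      linear_combination hxj
  have hdecomp (ρ : Fin 2) (j : Fin n) :
      G ρ j = x j * (![0, 1] ρ + G 0 j / x j * ![1, s] ρ) := by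
    fin_cases ρ
    · simp [mul_div_cancel₀ _ (hx j)]
    · simp only [Fin.mk_one, Matrix.cons_val_one, Matrix.cons_val_fin_one]
      field_simp [hx j]
      ring
  refine ⟨x, fun j => G 0 j / x j, ![0, 1], ![1, s], hx, fun i j hij => ?_, hdecomp⟩
  by_contra hne
  refine hx j (hG.smul_add_smul_eq_zero hne (a := x j) (b := -x i) (funext fun ρ => ?_)).1
  simp only [Pi.add_apply, Pi.smul_apply, Matrix.col, transpose_apply, smul_eq_mul,
    Pi.zero_apply, hdecomp ρ i, hdecomp ρ j, hij]
  ring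

end MDS

namespace Linebacking

variable {K : Type*} [Field K]

def moment (c y : K) (M : ℕ) : K := (y ^ M - c ^ M) / (y - c) ^ 2

/-- The last coordinate carries the first moment and the others the moments `3, …, t + 1`;
against weights summing to zero the second moment follows from the first, so that all the
moments `0, …, t + 1` needed for a Vandermonde system on `t + 2` nodes are controlled. -/
def momentVector (t : ℕ) (c y : K) : Fin t → K :=
  fun j => moment c y (if (j : ℕ) = t - 1 then 1 else j + 3)

section Moment

variable {c y : K}

theorem moment_zero : moment c y 0 = 0 := by simp [moment]

theorem moment_one (h : y ≠ c) : moment c y 1 = (y - c)⁻¹ := by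
  rw [moment, pow_one, pow_one, sq, div_mul_cancel_right₀ (sub_ne_zero.2 h)]

theorem moment_two (h : y ≠ c) : moment c y 2 = 1 + 2 * c * moment c y 1 := by
  rw [moment_one h, moment]
  field_simp [sub_ne_zero.2 h]
  ring

theorem momentVector_ne_zero {t : ℕ} (ht : 0 < t) (h : y ≠ c) : momentVector t c y ≠ 0 := by
  intro h0
  have := congrFun h0 ⟨t - 1, by omega⟩
  simp [momentVector, moment_one h, sub_ne_zero.2 h] at this

theorem sum_mul_moment_eq_zero {t m : ℕ} (ht : 0 < t) {ν : Fin m → K} (hc : ∀ k, ν k ≠ c)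
    {g : Fin m → K} (hg : ∑ k, g k = 0) (hgv : ∑ k, g k • momentVector t c (ν k) = 0) :
    ∀ M ≤ t + 1, ∑ k, g k * moment c (ν k) M = 0 := by
  have hcoord (j : Fin t) :
      ∑ k, g k * moment c (ν k) (if (j : ℕ) = t - 1 then 1 else j + 3) = 0 := by
    simpa [Finset.sum_apply, momentVector] using congrFun hgv j
  intro M hM
  match M with
  | 0 => simp [moment_zero]
  | 1 => simpa using hcoord ⟨t - 1, by omega⟩
  | 2 =>
    have h1 := hcoord ⟨t - 1, by omega⟩
    simp only [if_true] at h1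
    simp only [moment_two (hc _), mul_add, mul_one, Finset.sum_add_distrib, hg, zero_add]
    rw [← mul_zero (2 * c), ← h1, Finset.mul_sum]
    exact Finset.sum_congr rfl fun k _ => by ring
  | M + 3 => simpa [show M ≠ t - 1 by omega] using hcoord ⟨M, by omega⟩

theorem linearIndependent_momentVector_sub {t : ℕ} (ht : 0 < t) {ν : Fin (t + 1) → K}
    (hν : Function.Injective ν) (hc : ∀ k, ν k ≠ c) :
    LinearIndependent K fun j : Fin t =>
      momentVector t c (ν 0) - momentVector t c (ν j.succ) := by
  refine linearIndependent_fin_sub_succ (v := fun k => momentVector t c (ν k))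
    fun g hg hgv => ?_
  have hmoment := sum_mul_moment_eq_zero ht hc hg hgv
  have hscaled := eq_zero_of_forall_sum_mul_pow_sub_pow_eq_zero hν hc
    (a := fun k => g k / (ν k - c) ^ 2) fun M hM => by
      rw [← hmoment M hM]
      exact Finset.sum_congr rfl fun k _ => by simp only [moment]; ring
  funext k
  have hk : g k / (ν k - c) ^ 2 = 0 := congrFun hscaled k
  exact (div_eq_zero_iff.1 hk).resolve_right (pow_ne_zero 2 (sub_ne_zero.2 (hc k)))

end Moment

variable {n m : ℕ}

theorem lineDual_sub [Fintype K] {t : ℕ} {G : Matrix (Fin m) (Fin n) K}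
    {P : Fin t → Matrix (Fin m) (Fin n) K} {last : Fin t} {W₁ W₂ : Matrix (Fin n) (Fin t) K}
    (hlast : G *ᵥ (fun r => W₁ r last) = G *ᵥ (fun r => W₂ r last))
    (h : ∀ c ≠ last, G *ᵥ (fun r => W₁ r c) + P c *ᵥ (fun r => W₁ r last)
      = G *ᵥ (fun r => W₂ r c) + P c *ᵥ (fun r => W₂ r last)) :
    LineDual G P last (W₁ - W₂) := by
  refine ⟨?_, fun c hc => ?_⟩
  · change G *ᵥ ((fun r => W₁ r last) - fun r => W₂ r last) = 0
    rw [mulVec_sub, hlast, sub_self]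
  · change G *ᵥ ((fun r => W₁ r c) - fun r => W₂ r c)
      + P c *ᵥ ((fun r => W₁ r last) - fun r => W₂ r last) = 0
    rw [mulVec_sub, mulVec_sub, sub_add_sub_comm, h c hc, sub_self]

def piggyback (t : ℕ) (x z : Fin n → K) (u : Fin m → K) : Fin t → Matrix (Fin m) (Fin n) K :=
  fun c ρ j => -(x j * z j ^ ((c : ℕ) + 3) * u ρ)

def localRepair (t : ℕ) (x z : Fin n → K) (w i : Fin n) : Matrix (Fin n) (Fin t) K :=
  vecMulVec (Pi.single i (x w / x i) - Pi.single w 1) (momentVector t (z w) (z i))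

section LocalRepair

variable {t : ℕ} {x z : Fin n → K} {w i : Fin n}

theorem localRepair_apply_self (hi : i ≠ w) :
    localRepair t x z w i w = -momentVector t (z w) (z i) := by
  funext c
  simp [localRepair, vecMulVec_apply, hi.symm]

theorem localRepair_apply_of_ne {r : Fin n} (hr : r ≠ w) :
    localRepair t x z w i r = if r = i then (x w / x r) • momentVector t (z w) (z r) else 0 := by
  funext c
  by_cases hri : r = i
  · subst hri
    simp [localRepair, vecMulVec_apply, hr]
  · simp [localRepair, vecMulVec_apply, hr, hri]

variable {G : Matrix (Fin m) (Fin n) K} {f u : Fin m → K}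

theorem mulVec_localRepair (hG : ∀ ρ j, G ρ j = x j * (f ρ + z j * u ρ)) (hx : x i ≠ 0)
    (c : Fin t) :
    G *ᵥ (fun r => localRepair t x z w i r c)
      = (x w * (z i - z w) * momentVector t (z w) (z i) c) • u := by
  funext ρ
  simp only [mulVec, dotProduct, hG, localRepair, vecMulVec_apply, Pi.sub_apply, Pi.single_apply,
    sub_mul, ite_mul, zero_mul, one_mul, mul_sub, mul_ite, mul_zero, Finset.sum_sub_distrib,
    Finset.sum_ite_eq', Finset.mem_univ, if_true, Pi.smul_apply, smul_eq_mul]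
  field_simp
  ring

theorem piggyback_mulVec_localRepair (hx : x i ≠ 0) (c last : Fin t) :
    piggyback t x z u c *ᵥ (fun r => localRepair t x z w i r last)
      = (x w * (z w ^ ((c : ℕ) + 3) - z i ^ ((c : ℕ) + 3)) * momentVector t (z w) (z i) last)
        • u := by
  funext ρ
  simp only [mulVec, dotProduct, piggyback, localRepair, vecMulVec_apply, Pi.sub_apply,
    Pi.single_apply, sub_mul, ite_mul, zero_mul, one_mul, mul_sub, mul_ite, neg_mul, mul_zero,
    Finset.sum_sub_distrib, Finset.sum_ite_eq', Finset.mem_univ, if_true, sub_neg_eq_add,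
    Pi.smul_apply, smul_eq_mul]
  field_simp
  ring

theorem mulVec_localRepair_last {last : Fin t} (hlast : (last : ℕ) = t - 1)
    (hG : ∀ ρ j, G ρ j = x j * (f ρ + z j * u ρ)) (hx : x i ≠ 0)
    (hz : z i ≠ z w) : G *ᵥ (fun r => localRepair t x z w i r last) = x w • u := by
  rw [mulVec_localRepair hG hx, momentVector, if_pos hlast, moment_one hz,
    mul_assoc, mul_inv_cancel₀ (sub_ne_zero.2 hz), mul_one]

theorem mulVec_localRepair_add_piggyback {last : Fin t} (hlast : (last : ℕ) = t - 1)
    (hG : ∀ ρ j, G ρ j = x j * (f ρ + z j * u ρ))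
    (hx : x i ≠ 0) (hz : z i ≠ z w) {c : Fin t} (hc : c ≠ last) :
    G *ᵥ (fun r => localRepair t x z w i r c)
      + piggyback t x z u c *ᵥ (fun r => localRepair t x z w i r last) = 0 := by
  have hc' : (c : ℕ) ≠ t - 1 := fun h => hc (Fin.ext (h.trans hlast.symm))
  rw [mulVec_localRepair hG hx, piggyback_mulVec_localRepair hx, ← add_smul, momentVector,
    momentVector, if_neg hc', if_pos hlast, moment_one hz, moment]
  convert zero_smul K u using 2
  field_simp [sub_ne_zero.2 hz]
  ring

theorem lineDual_localRepair_sub [Fintype K] {last : Fin t} (hlast : (last : ℕ) = t - 1)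
    (hG : ∀ ρ j, G ρ j = x j * (f ρ + z j * u ρ))
    {i' : Fin n} (hx : x i ≠ 0) (hx' : x i' ≠ 0) (hz : z i ≠ z w) (hz' : z i' ≠ z w) :
    LineDual G (piggyback t x z u) last (localRepair t x z w i - localRepair t x z w i') :=
  lineDual_sub
    (by rw [mulVec_localRepair_last hlast hG hx hz, mulVec_localRepair_last hlast hG hx' hz'])
    fun _ hc => by rw [mulVec_localRepair_add_piggyback hlast hG hx hz hc,
      mulVec_localRepair_add_piggyback hlast hG hx' hz' hc]

end LocalRepair

section RepairScheme

variable [Fintype K] {t : ℕ}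

def IsRepairScheme (G : Matrix (Fin m) (Fin n) K) (P : Fin t → Matrix (Fin m) (Fin n) K)
    (last : Fin t) (istar : Fin n) (S : Finset (Fin n))
    (W : Fin t → Matrix (Fin n) (Fin t) K) : Prop :=
  (∀ j, LineDual G P last (W j)) ∧
  (∀ (j) (i : Fin n), i ∉ S → i ≠ istar → W j i = 0) ∧
  Module.finrank K (Submodule.span K (Set.range fun j => W j istar)) = t ∧
  ∀ i ∈ S, Module.finrank K (Submodule.span K (Set.range fun j => W j i)) = 1

theorem exists_isRepairScheme {G : Matrix (Fin m) (Fin n) K} {x z : Fin n → K}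
    {f u : Fin m → K} (hG : ∀ ρ j, G ρ j = x j * (f ρ + z j * u ρ)) (hx : ∀ j, x j ≠ 0)
    (hz : Function.Injective z) (ht : 0 < t) {last : Fin t} (hlast : (last : ℕ) = t - 1)
    {istar : Fin n} {S : Finset (Fin n)} (hS : S.card = t + 1) (hw : istar ∉ S) :
    ∃ W, IsRepairScheme G (piggyback t x z u) last istar S W := by
  set e := S.orderEmbOfFin hS
  have he (k) : e k ≠ istar := fun h => hw (h ▸ S.orderEmbOfFin_mem hS k)
  have hze (k) : z (e k) ≠ z istar := hz.ne (he k)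
  have hrow (A B : Matrix (Fin n) (Fin t) K) (r : Fin n) : (A - B) r = A r - B r := rfl
  refine ⟨fun j => localRepair t x z istar (e j.succ) - localRepair t x z istar (e 0),
    fun j => lineDual_localRepair_sub hlast hG (hx _) (hx _) (hze _) (hze _), ?_, ?_, ?_⟩
  · intro j i hiS hi
    have hie (k) : i ≠ e k := fun h => hiS (h ▸ S.orderEmbOfFin_mem hS k)
    simp [hrow, localRepair_apply_of_ne hi, hie]
  · have hstar : (fun j : Fin t =>
          (localRepair t x z istar (e j.succ) - localRepair t x z istar (e 0)) istar)
        = fun j => momentVector t (z istar) (z (e 0)) - momentVector t (z istar) (z (e j.succ)) :=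
      funext fun j => by
        rw [hrow, localRepair_apply_self (he _), localRepair_apply_self (he _), neg_sub_neg]
    rw [hstar]
    exact (finrank_span_eq_card (linearIndependent_momentVector_sub ht (ν := z ∘ e)
      (hz.comp e.injective) hze)).trans (Fintype.card_fin t)
  · intro i hi
    obtain ⟨k, rfl⟩ : ∃ k, e k = i := by
      rw [← Set.mem_range, Finset.range_orderEmbOfFin]; exact hi
    have hmem (i : Fin n) :
        localRepair t x z istar i (e k) ∈ K ∙ momentVector t (z istar) (z (e k)) := by
      rw [localRepair_apply_of_ne (he k)]
      split_ifs
      · exact Submodule.smul_mem _ _ (Submodule.mem_span_singleton_self _)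
      · exact zero_mem _
    have hne : (x istar / x (e k)) • momentVector t (z istar) (z (e k)) ≠ 0 :=
      smul_ne_zero (div_ne_zero (hx _) (hx _)) (momentVector_ne_zero ht (hze k))
    obtain ⟨j₀, hj₀⟩ : ∃ j₀ : Fin t,
        (localRepair t x z istar (e j₀.succ) - localRepair t x z istar (e 0)) (e k) ≠ 0 := by
      cases k using Fin.cases with
      | zero => exact ⟨⟨0, ht⟩, by simpa [hrow, localRepair_apply_of_ne (he 0)] using hne⟩
      | succ j => exact ⟨j, by simpa [hrow, localRepair_apply_of_ne (he j.succ)] using hne⟩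
    exact finrank_span_range_eq_one (fun j => (hrow _ _ _).symm ▸ sub_mem (hmem _) (hmem _)) hj₀

end RepairScheme

end Linebacking

/-- for `k = 2`, `2 ≤ t ≤ n-2`, and field size `q` large enough that
`n·C(n-1,t+1)·(1 - ∏_{i=1}^{t-1}(1-q^{-i})) < 1`, there exist piggybacking matrices
making the linebacking code on MDS base `G ∈ F_q^{2×n}` achieve perfect bandwidth
`t+1` in the "any d" regime: every node `i*` can be repaired from every repair set
`S` of size `t+1` by a linear repair scheme downloading one symbol per helper. -/
theorem perfect_bandwidth_k_two_any_d {n t : ℕ} (K : Type*) [Field K] [Fintype K]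
    (ht : 2 ≤ t) (htn : t + 2 ≤ n)
    (G : Matrix (Fin 2) (Fin n) K) (hMDS : IsMDS G)
    (hq : (n : ℝ) * ((n - 1).choose (t + 1)) *
      (1 - ∏ i ∈ Finset.Icc 1 (t - 1), (1 - ((Fintype.card K : ℝ))⁻¹ ^ i)) < 1) :
    ∃ P : Fin t → Matrix (Fin 2) (Fin n) K,
      ∀ (istar : Fin n) (S : Finset (Fin n)), S.card = t + 1 → istar ∉ S →
        ∃ W : Fin t → Matrix (Fin n) (Fin t) K,
          (∀ j, LineDual G P ⟨t - 1, by omega⟩ (W j)) ∧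
          (∀ (j) (i : Fin n), i ∉ S → i ≠ istar → W j i = 0) ∧
          Module.finrank K (Submodule.span K (Set.range fun j => W j istar)) = t ∧
          ∀ i ∈ S,
            Module.finrank K (Submodule.span K (Set.range fun j => W j i)) = 1 := by
  have hcard : n < Fintype.card K :=
    lt_of_mul_choose_mul_one_sub_prod_lt_one ht htn Fintype.card_pos hq
  obtain ⟨x, z, f, u, hx, hz, hG⟩ := hMDS.exists_eq_mul_add_mul (by omega) hcard
  exact ⟨Linebacking.piggyback t x z u, fun istar S hS hw =>
    Linebacking.exists_isRepairScheme hG hx hz (by omega) rfl hS hw⟩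
end
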